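/- arXiv:2006.15999 — 7 statements merged into one kernel-verified Lean document; each statement's English description precedes it below -/
import Mathlib

section
/- There exists a constant C > 0 such that for every integer n ≥ 1 and every n×n 2D-string A over any alphabet, the number of distinct tandems occurring as subarrays of A (two occurrences with equal content count once) is at most C · n³. -/
open scoped Classical

namespace Formal

variable {α : Type*}

/-! ### 2D-strings

An `m × n` 2D-string is modelled as a function `A : ℕ → ℕ → α` considered on
`[0, m) × [0, n)` (0-based indices).  The subarray with top-left corner `(i, j)`,
`r` rows and `c` columns is the window `A[i..i+r-1, j..j+c-1]`. -/

/-- `p` is a horizontal period of the `r × c` subarray of `A` with top-left corner `(i,j)`: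
column `y` equals column `y + p` whenever both are inside the window. -/
def HPeriod (A : ℕ → ℕ → α) (i j r c p : ℕ) : Prop :=
  ∀ x < r, ∀ y, y + p < c → A (i + x) (j + y) = A (i + x) (j + (y + p))

/-- The smallest (positive) horizontal period of the `r × c` subarray of `A`
with top-left corner `(i,j)`. -/
noncomputable def hper (A : ℕ → ℕ → α) (i j r c : ℕ) : ℕ :=
  sInf {p | 0 < p ∧ HPeriod A i j r c p}

/-- `q` is a vertical period of the `r × c` subarray of `A` with top-left corner `(i,j)`. -/
def VPeriod (A : ℕ → ℕ → α) (i j r c q : ℕ) : Prop :=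
  ∀ y < c, ∀ x, x + q < r → A (i + x) (j + y) = A (i + (x + q)) (j + y)

/-- The smallest (positive) vertical period of the `r × c` subarray of `A`
with top-left corner `(i,j)`. -/
noncomputable def vper (A : ℕ → ℕ → α) (i j r c : ℕ) : ℕ :=
  sInf {q | 0 < q ∧ VPeriod A i j r c q}

/-- The pair (smallest horizontal period, smallest vertical period). -/
noncomputable def pers (A : ℕ → ℕ → α) (i j r c : ℕ) : ℕ × ℕ :=
  (hper A i j r c, vper A i j r c)

/-- The subarray `A[i1..i2, j1..j2]` (inclusive, 0-based) of the `n × n` 2D-string `A`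
is a 2D-run: it is horizontally and vertically periodic, and every extension by one
adjacent row or column (whenever it exists within `A`) changes the smallest horizontal
or vertical period. -/
def IsRun2D (A : ℕ → ℕ → α) (n i1 i2 j1 j2 : ℕ) : Prop :=
  i1 ≤ i2 ∧ i2 < n ∧ j1 ≤ j2 ∧ j2 < n ∧
  2 * hper A i1 j1 (i2 - i1 + 1) (j2 - j1 + 1) ≤ j2 - j1 + 1 ∧
  2 * vper A i1 j1 (i2 - i1 + 1) (j2 - j1 + 1) ≤ i2 - i1 + 1 ∧
  (0 < i1 →
    pers A (i1 - 1) j1 (i2 - i1 + 2) (j2 - j1 + 1) ≠ pers A i1 j1 (i2 - i1 + 1) (j2 - j1 + 1)) ∧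
  (i2 + 1 < n →
    pers A i1 j1 (i2 - i1 + 2) (j2 - j1 + 1) ≠ pers A i1 j1 (i2 - i1 + 1) (j2 - j1 + 1)) ∧
  (0 < j1 →
    pers A i1 (j1 - 1) (i2 - i1 + 1) (j2 - j1 + 2) ≠ pers A i1 j1 (i2 - i1 + 1) (j2 - j1 + 1)) ∧
  (j2 + 1 < n →
    pers A i1 j1 (i2 - i1 + 1) (j2 - j1 + 2) ≠ pers A i1 j1 (i2 - i1 + 1) (j2 - j1 + 1))

/-- The subarray `A[i1..i2, j1..j2]` of the `n × n` 2D-string `A` is a horizontal run: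
it is horizontally periodic and extending it by the column to the left or to the right
(whenever it exists within `A`) changes the smallest horizontal period. -/
def IsHRun (A : ℕ → ℕ → α) (n i1 i2 j1 j2 : ℕ) : Prop :=
  i1 ≤ i2 ∧ i2 < n ∧ j1 ≤ j2 ∧ j2 < n ∧
  2 * hper A i1 j1 (i2 - i1 + 1) (j2 - j1 + 1) ≤ j2 - j1 + 1 ∧
  (0 < j1 →
    hper A i1 (j1 - 1) (i2 - i1 + 1) (j2 - j1 + 2) ≠ hper A i1 j1 (i2 - i1 + 1) (j2 - j1 + 1)) ∧
  (j2 + 1 < n →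
    hper A i1 j1 (i2 - i1 + 1) (j2 - j1 + 2) ≠ hper A i1 j1 (i2 - i1 + 1) (j2 - j1 + 1))

/-- The content of the `h × w` subarray of `A` with top-left corner `(i,j)`, encoded
as (height, width, entries).  Two subarrays are equal as arrays iff their contents
are equal. -/
def content (A : ℕ → ℕ → α) (i j h w : ℕ) : ℕ × ℕ × (ℕ → ℕ → Option α) :=
  (h, w, fun x y => if x < h ∧ y < w then some (A (i + x) (j + y)) else none)

/-- The `(a*h) × (b*w)` subarray of `A` with top-left corner `(i,j)` equals `W^{a,b}`,
where `W` is its own top-left `h × w` block: the subarray is tiled by `a × b` copies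
of this block. -/
def OccPow (A : ℕ → ℕ → α) (i j h w a b : ℕ) : Prop :=
  ∀ x < a * h, ∀ y < b * w, A (i + x) (j + y) = A (i + x % h) (j + y % w)

/-- The array `W^{a,b}`, where `W` is an (abstract) `h × w` array, occurs in `A`
at top-left corner `(i,j)`. -/
def OccAt (A : ℕ → ℕ → α) (i j : ℕ) (W : ℕ → ℕ → α) (h w a b : ℕ) : Prop :=
  ∀ x < a * h, ∀ y < b * w, A (i + x) (j + y) = W (x % h) (y % w)

/-- The `h × w` array `W` is primitive: `W = B^{α,β}` implies `α = β = 1`,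
i.e. if `W` is tiled by copies of its top-left `p × q` block with `p ∣ h`, `q ∣ w`,
then `p = h` and `q = w`. -/
def PrimitiveA (W : ℕ → ℕ → α) (h w : ℕ) : Prop :=
  0 < h ∧ 0 < w ∧ ∀ p q, 0 < p → 0 < q → p ∣ h → q ∣ w →
    (∀ x < h, ∀ y < w, W x y = W (x % p) (y % q)) → p = h ∧ q = w

/-- The `h × w` array `W` equals the `h' × w'` array `W'` (as arrays). -/
def ArrEq (W : ℕ → ℕ → α) (h w : ℕ) (W' : ℕ → ℕ → α) (h' w' : ℕ) : Prop :=
  h = h' ∧ w = w' ∧ ∀ x < h, ∀ y < w, W x y = W' x y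

/-- `W` is an `(a,b)`-array, i.e. `2^a ≤ height W < 2^(a+1)` and `2^b ≤ width W < 2^(b+1)`.
Only the dimensions matter. -/
def IsABDims (a b h w : ℕ) : Prop :=
  2 ^ a ≤ h ∧ h < 2 ^ (a + 1) ∧ 2 ^ b ≤ w ∧ w < 2 ^ (b + 1)

/-- The set of contents of all distinct quartics (arrays of the form `W^{2,2}`)
occurring as subarrays of the `n × n` 2D-string `A`. -/
def QuarticContents (A : ℕ → ℕ → α) (n : ℕ) : Set (ℕ × ℕ × (ℕ → ℕ → Option α)) :=
  {c | ∃ i j h w, 0 < h ∧ 0 < w ∧ i + 2 * h ≤ n ∧ j + 2 * w ≤ n ∧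
    OccPow A i j h w 2 2 ∧ c = content A i j (2 * h) (2 * w)}

/-- The set of contents of all distinct tandems (arrays of the form `W^{1,2}`)
occurring as subarrays of the `n × n` 2D-string `A`. -/
def TandemContents (A : ℕ → ℕ → α) (n : ℕ) : Set (ℕ × ℕ × (ℕ → ℕ → Option α)) :=
  {c | ∃ i j h w, 0 < h ∧ 0 < w ∧ i + h ≤ n ∧ j + 2 * w ≤ n ∧
    OccPow A i j h w 1 2 ∧ c = content A i j h (2 * w)}

/-- The set of contents of all distinct thin quartics of the `n × n` 2D-string `A`:
quartics `W^{2a,2b}` with `W` primitive which are not primitively rooted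
(`¬(a = 1 ∧ b = 1)`) and have `a = 1` or `b = 1`. -/
def ThinQuarticContents (A : ℕ → ℕ → α) (n : ℕ) : Set (ℕ × ℕ × (ℕ → ℕ → Option α)) :=
  {c | ∃ i j h w a b, 0 < a ∧ 0 < b ∧ (a = 1 ∨ b = 1) ∧ ¬(a = 1 ∧ b = 1) ∧
    PrimitiveA (fun x y => A (i + x) (j + y)) h w ∧
    i + 2 * a * h ≤ n ∧ j + 2 * b * w ≤ n ∧
    OccPow A i j h w (2 * a) (2 * b) ∧ c = content A i j (2 * a * h) (2 * b * w)}

/-! ### 1D-strings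

A string of length `n` is modelled as `S : ℕ → α` considered on `[0, n)` (0-based). -/

/-- `p` is a period of the factor `S[i..j]` (inclusive, 0-based). -/
def FPeriod (S : ℕ → α) (i j p : ℕ) : Prop :=
  ∀ k, i ≤ k → k + p ≤ j → S k = S (k + p)

/-- The smallest (positive) period of the factor `S[i..j]`. -/
noncomputable def fper (S : ℕ → α) (i j : ℕ) : ℕ :=
  sInf {p | 0 < p ∧ FPeriod S i j p}

/-- The factor `S[i..j]` of the length-`n` string `S` is a run (maximal repetition). -/
def IsRun1D (S : ℕ → α) (n i j : ℕ) : Prop :=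
  i ≤ j ∧ j < n ∧ 2 * fper S i j ≤ j - i + 1 ∧
  (0 < i → S (i - 1) ≠ S (i - 1 + fper S i j)) ∧
  (j + 1 < n → S (j + 1) ≠ S (j + 1 - fper S i j))

/-- The factor `S[a..a+m-1]` is a primitive string: it is nonempty and is not a proper
power, i.e. it has no period `d < m` dividing `m`. -/
def PrimitiveF (S : ℕ → α) (a m : ℕ) : Prop :=
  0 < m ∧ ∀ d, 0 < d → d ∣ m → (∀ x, x + d < m → S (a + x) = S (a + (x + d))) → d = m



/-! ### Auxiliary machinery for the proof -/

/-- `p` is a (full) period of `s` on `[0, L)`. -/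
def Per {β : Type*} (s : ℕ → β) (L p : ℕ) : Prop :=
  ∀ y, y + p < L → s (y + p) = s y

/-- `j` is a rotation invariance of `c ↦ s (c % π)`. -/
def Rot {β : Type*} (s : ℕ → β) (π j : ℕ) : Prop :=
  ∀ c, s ((c + j) % π) = s (c % π)

lemma per_sub {β : Type*} (s : ℕ → β) (L : ℕ) {a b : ℕ} (ha : 0 < a) (hab : a < b)
    (hL : a + b ≤ L) (pa : Per s L a) (pb : Per s L b) : Per s L (b - a) := by
  intro y hy
  rcases lt_or_ge (y + b) L with h | h
  · have h1 : s ((y + (b - a)) + a) = s (y + (b - a)) := pa _ (by omega)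
    have h2 : (y + (b - a)) + a = y + b := by omega
    rw [h2] at h1
    rw [← h1]
    exact pb y h
  · have h1 : s ((y - a) + a) = s (y - a) := pa _ (by omega)
    have h2 : (y - a) + a = y := by omega
    rw [h2] at h1
    have h3 : s ((y - a) + b) = s (y - a) := pb _ (by omega)
    have h4 : (y - a) + b = y + (b - a) := by omega
    rw [h4] at h3
    rw [h3, ← h1]

lemma per_gcd {β : Type*} (s : ℕ → β) (L : ℕ) :
    ∀ m a b, a + b ≤ m → 0 < a → 0 < b → a + b ≤ L → Per s L a → Per s L b →
      Per s L (Nat.gcd a b) := by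
  intro m
  induction m with
  | zero => intro a b h ha; omega
  | succ m ih =>
    intro a b hm ha hb hL pa pb
    rcases lt_trichotomy a b with h | h | h
    · have psub : Per s L (b - a) := per_sub s L ha h hL pa pb
      have hg : Nat.gcd a b = Nat.gcd a (b - a) := by
        conv_lhs => rw [show b = (b - a) + a by omega]
        rw [Nat.gcd_add_self_right]
      rw [hg]
      exact ih a (b - a) (by omega) ha (by omega) (by omega) pa psub
    · rw [h, Nat.gcd_self]; exact pb
    · have psub : Per s L (a - b) := per_sub s L hb h (by omega) pb pa
      have hg : Nat.gcd a b = Nat.gcd b (a - b) := by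
        rw [Nat.gcd_comm]
        conv_lhs => rw [show a = (a - b) + b by omega]
        rw [Nat.gcd_add_self_right]
      rw [hg]
      exact ih b (a - b) (by omega) hb (by omega) (by omega) pb psub

lemma per_mod {β : Type*} (s : ℕ → β) (L p : ℕ) (hp : 0 < p) (h : Per s L p) :
    ∀ a, a < L → s a = s (a % p) := by
  intro a
  induction a using Nat.strong_induction_on with
  | _ a ih =>
    intro ha
    rcases lt_or_ge a p with h1 | h1
    · rw [Nat.mod_eq_of_lt h1]
    · have e1 : s ((a - p) + p) = s (a - p) := h (a - p) (by omega)
      have e2 : (a - p) + p = a := by omega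
      rw [e2] at e1
      rw [e1, ih (a - p) (by omega) (by omega)]
      congr 1
      exact (Nat.mod_eq_sub_mod h1).symm

lemma rot_sub {β : Type*} (s : ℕ → β) (π : ℕ) {a b : ℕ} (hab : a < b)
    (ra : Rot s π a) (rb : Rot s π b) : Rot s π (b - a) := by
  intro c
  have h1 := ra (c + (b - a))
  have h2 : c + (b - a) + a = c + b := by omega
  rw [h2] at h1
  rw [← h1]
  exact rb c

lemma rot_gcd {β : Type*} (s : ℕ → β) (π : ℕ) :
    ∀ m a b, a + b ≤ m → 0 < a → 0 < b → Rot s π a → Rot s π b → Rot s π (Nat.gcd a b) := by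
  intro m
  induction m with
  | zero => intro a b h ha; omega
  | succ m ih =>
    intro a b hm ha hb ra rb
    rcases lt_trichotomy a b with h | h | h
    · have rsub : Rot s π (b - a) := rot_sub s π h ra rb
      have hg : Nat.gcd a b = Nat.gcd a (b - a) := by
        conv_lhs => rw [show b = (b - a) + a by omega]
        rw [Nat.gcd_add_self_right]
      rw [hg]
      exact ih a (b - a) (by omega) ha (by omega) ra rsub
    · rw [h, Nat.gcd_self]; exact rb
    · have rsub : Rot s π (a - b) := rot_sub s π h rb ra
      have hg : Nat.gcd a b = Nat.gcd b (a - b) := by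
        rw [Nat.gcd_comm]
        conv_lhs => rw [show a = (a - b) + b by omega]
        rw [Nat.gcd_add_self_right]
      rw [hg]
      exact ih b (a - b) (by omega) hb (by omega) rb rsub

/-- **Core three-squares lemma.** -/
lemma three_squares {β : Type*} (s : ℕ → β) (N u v w : ℕ) (hu : 0 < u) (huv : u < v)
    (hvw : v < w) (hwN : 2 * w ≤ N)
    (Pu : ∀ y < u, s (y + u) = s y) (Pv : ∀ y < v, s (y + v) = s y)
    (Pw : ∀ y < w, s (y + w) = s y)
    (Ru : ∀ t, 0 < t → t + 2 * u ≤ N → (∀ y < 2 * u, s (t + y) = s y) → False) : False := by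
  -- Step 1: w < 2u
  have hw2u : w < 2 * u := by
    by_contra hcon
    push_neg at hcon
    refine Ru w (by omega) (by omega) (fun y hy => ?_)
    have h := Pw y (by omega)
    rwa [Nat.add_comm] at h
  set d1 := v - u with hd1
  set d2 := w - v with hd2
  have hd1p : 0 < d1 := by omega
  have hd2p : 0 < d2 := by omega
  have hsum : d1 + d2 < u := by omega
  have p1 : Per s u d1 := by
    intro y hy
    have h1 : s (y + d1 + u) = s (y + d1) := Pu (y + d1) hy
    have h3 : y + d1 + u = y + v := by omega
    rw [h3] at h1
    rw [← h1]
    exact Pv y (by omega)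
  have p2 : Per s u d2 := by
    intro y hy
    have h1 : s (y + d2 + v) = s (y + d2) := Pv (y + d2) (by omega)
    have h3 : y + d2 + v = y + w := by omega
    rw [h3] at h1
    rw [← h1]
    exact Pw y (by omega)
  -- minimal period of s on [0,u)
  have huPS : u ∈ {p | 0 < p ∧ Per s u p} := ⟨hu, fun y hy => absurd hy (by omega)⟩
  set π := sInf {p | 0 < p ∧ Per s u p} with hπ
  have hπmem : 0 < π ∧ Per s u π := Nat.sInf_mem (⟨u, huPS⟩ : Set.Nonempty _)
  obtain ⟨hπpos, hπper⟩ := hπmem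
  have hπd1 : π ≤ d1 := Nat.sInf_le ⟨hd1p, p1⟩
  have hπd2 : π ≤ d2 := Nat.sInf_le ⟨hd2p, p2⟩
  have hdvd : ∀ d, 0 < d → Per s u d → d + π ≤ u → π ∣ d := by
    intro d hd hper hle
    have hg : Per s u (Nat.gcd π d) :=
      per_gcd s u (π + d) π d le_rfl hπpos hd (by omega) hπper hper
    have hgpos : 0 < Nat.gcd π d := Nat.gcd_pos_of_pos_left _ hπpos
    have hle2 : π ≤ Nat.gcd π d := Nat.sInf_le ⟨hgpos, hg⟩
    have heq : Nat.gcd π d = π :=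
      le_antisymm (Nat.le_of_dvd hπpos (Nat.gcd_dvd_left π d)) hle2
    exact heq ▸ Nat.gcd_dvd_right π d
  have hdvd1 : π ∣ d1 := hdvd d1 hd1p p1 (by omega)
  have hdvd2 : π ∣ d2 := hdvd d2 hd2p p2 (by omega)
  have smod : ∀ a, a < u → s a = s (a % π) := per_mod s u π hπpos hπper
  -- key identity
  set e := u - d2 with he
  have hep : 0 < e := by omega
  have key : ∀ t, t < π → s t = s (e + t) := by
    intro t ht
    have h1 : s (u + t) = s t := by
      have h := Pu t (by omega); rwa [Nat.add_comm] at h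
    have hA : s (u + t + v) = s (u + t) := Pv (u + t) (by omega)
    have hB : s ((u + t - d2) + w) = s (u + t - d2) := Pw (u + t - d2) (by omega)
    have hC : u + t + v = (u + t - d2) + w := by omega
    rw [hC] at hA
    have h2 : s (u + t) = s (u + t - d2) := by rw [← hA]; exact hB
    have hD : u + t - d2 = e + t := by omega
    rw [← h1, h2, hD]
  -- rotation invariance by e
  have rotE : Rot s π e := by
    intro c
    have ht : c % π < π := Nat.mod_lt _ hπpos
    have h1 : s (c % π) = s (e + c % π) := key _ ht
    have h2 : s (e + c % π) = s ((e + c % π) % π) := smod _ (by omega)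
    have h3 : (e + c % π) % π = (c + e) % π := by
      conv_rhs => rw [Nat.add_comm c e, Nat.add_mod e c π]
      rw [Nat.add_mod e (c % π) π, Nat.mod_mod_of_dvd c (dvd_refl π)]
    rw [← h3, ← h2, ← h1]
  have rotπ : Rot s π π := fun c => by rw [Nat.add_mod_right]
  have rotg : Rot s π (Nat.gcd e π) := rot_gcd s π (e + π) e π le_rfl hep hπpos rotE rotπ
  have hgdvd : Nat.gcd e π ∣ π := Nat.gcd_dvd_right e π
  have hgpos : 0 < Nat.gcd e π := Nat.gcd_pos_of_pos_right _ hπpos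
  have hπu : π ∣ u := by
    rcases eq_or_lt_of_le (Nat.le_of_dvd hπpos hgdvd) with heq | hlt
    · have hde : π ∣ e := heq ▸ Nat.gcd_dvd_left e π
      have : u = e + d2 := by omega
      rw [this]; exact Nat.dvd_add hde hdvd2
    · exfalso
      have pg : Per s u (Nat.gcd e π) := by
        intro y hy
        have m1 : s (y + Nat.gcd e π) = s ((y + Nat.gcd e π) % π) := smod _ hy
        have m2 : s y = s (y % π) := smod _ (by omega)
        have m3 : (y % π + Nat.gcd e π) % π = (y + Nat.gcd e π) % π := by
          conv_rhs => rw [Nat.add_mod]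
          rw [Nat.mod_eq_of_lt hlt]
        have m4 : s ((y % π + Nat.gcd e π) % π) = s ((y % π) % π) := rotg (y % π)
        rw [m1, ← m3, m4, Nat.mod_mod_of_dvd y (dvd_refl π), ← m2]
      have : π ≤ Nat.gcd e π := Nat.sInf_le ⟨hgpos, pg⟩
      omega
  have hπw : π ∣ w := by
    have : w = u + (d1 + d2) := by omega
    rw [this]; exact Nat.dvd_add hπu (Nat.dvd_add hdvd1 hdvd2)
  -- global periodicity with period π on [0, 2w)
  have glob : ∀ z, z < 2 * w → s z = s (z % π) := by
    intro z hz
    have hfold1 : s z = s (z % w) := by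
      rcases lt_or_ge z w with h | h
      · rw [Nat.mod_eq_of_lt h]
      · have h1 : s ((z - w) + w) = s (z - w) := Pw (z - w) (by omega)
        have h2 : (z - w) + w = z := by omega
        rw [h2] at h1
        rw [h1]
        congr 1
        rw [Nat.mod_eq_sub_mod h, Nat.mod_eq_of_lt (show z - w < w by omega)]
    have hzw : z % w < w := Nat.mod_lt _ (by omega)
    have hfold2 : s (z % w) = s ((z % w) % u) := by
      rcases lt_or_ge (z % w) u with h | h
      · rw [Nat.mod_eq_of_lt h]
      · have h1 : s ((z % w - u) + u) = s (z % w - u) := Pu (z % w - u) (by omega)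
        have h2 : (z % w - u) + u = z % w := by omega
        rw [h2] at h1
        rw [h1]
        congr 1
        rw [Nat.mod_eq_sub_mod h, Nat.mod_eq_of_lt (show z % w - u < u by omega)]
    have hfold3 : s ((z % w) % u) = s (((z % w) % u) % π) := smod _ (Nat.mod_lt _ hu)
    have hmods : ((z % w) % u) % π = z % π := by
      rw [Nat.mod_mod_of_dvd _ hπu, Nat.mod_mod_of_dvd _ hπw]
    rw [hfold1, hfold2, hfold3, hmods]
  refine Ru π hπpos (by omega) (fun y hy => ?_)
  have g1 : s (π + y) = s ((π + y) % π) := glob _ (by omega)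
  have g2 : s y = s (y % π) := glob _ (by omega)
  rw [g1, g2, Nat.add_mod_left]

/-- An occurrence of a tandem content `c` at top-left corner `(i,j)`. -/
def TOcc (A : ℕ → ℕ → α) (n : ℕ) (c : ℕ × ℕ × (ℕ → ℕ → Option α)) (i j : ℕ) : Prop :=
  0 < c.1 ∧ 0 < c.2.1 ∧ i + c.1 ≤ n ∧ j + c.2.1 ≤ n ∧ c = content A i j c.1 c.2.1

lemma content_ext (A : ℕ → ℕ → α) {i j i' j' h w : ℕ}
    (hent : ∀ x < h, ∀ y < w, A (i + x) (j + y) = A (i' + x) (j' + y)) :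
    content A i j h w = content A i' j' h w := by
  unfold content
  refine congrArg (Prod.mk h) (congrArg (Prod.mk w) ?_)
  funext x y
  by_cases hxy : x < h ∧ y < w
  · simp only [if_pos hxy, hent x hxy.1 y hxy.2]
  · simp only [if_neg hxy]

lemma content_eq_elim {A : ℕ → ℕ → α} {i j i' j' h w h' w' : ℕ}
    (hc : content A i j h w = content A i' j' h' w') :
    h = h' ∧ w = w' ∧ ∀ x < h, ∀ y < w, A (i + x) (j + y) = A (i' + x) (j' + y) := by
  have e1 : h = h' := congrArg Prod.fst hc
  have e2 : w = w' := congrArg (fun p => p.2.1) hc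
  subst e1; subst e2
  refine ⟨rfl, rfl, fun x hx y hy => ?_⟩
  have h3 := congrFun (congrFun (congrArg (fun p => p.2.2) hc) x) y
  simp only [content] at h3
  rw [if_pos ⟨hx, hy⟩, if_pos ⟨hx, hy⟩] at h3
  exact Option.some.inj h3

lemma mem_TOcc {A : ℕ → ℕ → α} {n : ℕ} {c : ℕ × ℕ × (ℕ → ℕ → Option α)}
    (hc : c ∈ TandemContents A n) : ∃ i j, TOcc A n c i j := by
  obtain ⟨i, j, h, w, hh, hw, hin, hjn, _, hceq⟩ := hc
  subst hceq
  refine ⟨i, j, hh, show 0 < 2 * w by omega, show i + h ≤ n from hin,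
    show j + 2 * w ≤ n from hjn, rfl⟩

lemma width_even {A : ℕ → ℕ → α} {n : ℕ} {c : ℕ × ℕ × (ℕ → ℕ → Option α)}
    (hc : c ∈ TandemContents A n) : ∃ w, c.2.1 = 2 * w := by
  obtain ⟨i, j, h, w, _, _, _, _, _, hceq⟩ := hc
  subst hceq
  exact ⟨w, rfl⟩

lemma occ_per {A : ℕ → ℕ → α} {n : ℕ} {c : ℕ × ℕ × (ℕ → ℕ → Option α)}
    (hc : c ∈ TandemContents A n) {i j : ℕ} (ho : TOcc A n c i j) {w : ℕ}
    (hw : c.2.1 = 2 * w) :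
    ∀ x < c.1, ∀ y < w, A (i + x) (j + (y + w)) = A (i + x) (j + y) := by
  obtain ⟨i0, j0, h0, w0, hh0, hw0, hin, hjn, hocc, hceq⟩ := hc
  have e1 : c.1 = h0 := by rw [hceq]; rfl
  have e2 : c.2.1 = 2 * w0 := by rw [hceq]; rfl
  have hww : w = w0 := by omega
  subst hww
  have hcontent : content A i j c.1 c.2.1 = content A i0 j0 h0 (2 * w) := by
    rw [← ho.2.2.2.2, hceq]
  rw [e1, e2] at hcontent
  obtain ⟨-, -, hent⟩ := content_eq_elim hcontent
  intro x hx y hy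
  rw [e1] at hx
  have q1 : A (i + x) (j + (y + w)) = A (i0 + x) (j0 + (y + w)) :=
    hent x hx (y + w) (by omega)
  have q2 : A (i + x) (j + y) = A (i0 + x) (j0 + y) := hent x hx y (by omega)
  have q3 : A (i0 + x) (j0 + (y + w)) = A (i0 + x % h0) (j0 + (y + w) % w) :=
    hocc x (by omega) (y + w) (by omega)
  rw [Nat.mod_eq_of_lt hx, Nat.add_mod_right, Nat.mod_eq_of_lt hy] at q3
  rw [q1, q3, ← q2]

noncomputable def Jc (A : ℕ → ℕ → α) (n : ℕ) (c : ℕ × ℕ × (ℕ → ℕ → Option α)) : ℕ :=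
  sSup {j | ∃ i, TOcc A n c i j}

noncomputable def Ic (A : ℕ → ℕ → α) (n : ℕ) (c : ℕ × ℕ × (ℕ → ℕ → Option α)) : ℕ :=
  sInf {i | TOcc A n c i (Jc A n c)}

lemma jc_bdd (A : ℕ → ℕ → α) (n : ℕ) (c : ℕ × ℕ × (ℕ → ℕ → Option α)) :
    BddAbove {j | ∃ i, TOcc A n c i j} := by
  refine ⟨n, fun j hj => ?_⟩
  obtain ⟨i, hi⟩ := hj
  have := hi.2.2.2.1
  omega

lemma occ_canon {A : ℕ → ℕ → α} {n : ℕ} {c : ℕ × ℕ × (ℕ → ℕ → Option α)}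
    (hc : c ∈ TandemContents A n) : TOcc A n c (Ic A n c) (Jc A n c) := by
  obtain ⟨i, j, ho⟩ := mem_TOcc hc
  have hmem : Jc A n c ∈ {j | ∃ i, TOcc A n c i j} :=
    Nat.sSup_mem ⟨j, i, ho⟩ (jc_bdd A n c)
  obtain ⟨i', hi'⟩ := hmem
  have h2 : Ic A n c ∈ {i | TOcc A n c i (Jc A n c)} := Nat.sInf_mem ⟨i', hi'⟩
  exact h2

lemma le_jc {A : ℕ → ℕ → α} {n : ℕ} {c : ℕ × ℕ × (ℕ → ℕ → Option α)} {i j : ℕ}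
    (ho : TOcc A n c i j) : j ≤ Jc A n c :=
  le_csSup (jc_bdd A n c) ⟨i, ho⟩

lemma no_three (A : ℕ → ℕ → α) (n : ℕ) (c1 c2 c3 : ℕ × ℕ × (ℕ → ℕ → Option α)) (i j : ℕ)
    (m1 : c1 ∈ TandemContents A n) (m2 : c2 ∈ TandemContents A n)
    (m3 : c3 ∈ TandemContents A n)
    (o1 : TOcc A n c1 i j) (o2 : TOcc A n c2 i j) (o3 : TOcc A n c3 i j)
    (hh2 : c2.1 = c1.1) (hh3 : c3.1 = c1.1)
    (w12 : c1.2.1 < c2.2.1) (w23 : c2.2.1 < c3.2.1)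
    (hmax : ∀ i' j', TOcc A n c1 i' j' → j' ≤ j) : False := by
  obtain ⟨w1, hw1⟩ := width_even m1
  obtain ⟨w2, hw2⟩ := width_even m2
  obtain ⟨w3, hw3⟩ := width_even m3
  set s : ℕ → (Fin c1.1 → α) := fun y => fun x => A (i + x.1) (j + y) with hs
  have P1 : ∀ y < w1, s (y + w1) = s y := by
    intro y hy; funext x
    exact occ_per m1 o1 hw1 x.1 x.2 y hy
  have P2 : ∀ y < w2, s (y + w2) = s y := by
    intro y hy; funext x
    exact occ_per m2 o2 hw2 x.1 (by rw [hh2]; exact x.2) y hy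
  have P3 : ∀ y < w3, s (y + w3) = s y := by
    intro y hy; funext x
    exact occ_per m3 o3 hw3 x.1 (by rw [hh3]; exact x.2) y hy
  have hw1p : 0 < w1 := by have := o1.2.1; omega
  have hjn : j + 2 * w3 ≤ n := by have := o3.2.2.2.1; omega
  refine three_squares s (n - j) w1 w2 w3 hw1p (by omega) (by omega) (by omega)
    P1 P2 P3 ?_
  intro t ht htN hEq
  have step : content A i (j + t) c1.1 c1.2.1 = content A i j c1.1 c1.2.1 := by
    refine content_ext A (fun x hx y hy => ?_)
    have hyy : y < 2 * w1 := by omega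
    have := congrFun (hEq y hyy) ⟨x, hx⟩
    simp only [hs] at this
    have hidx : j + t + y = j + (t + y) := by omega
    rw [hidx]
    exact this
  have hocc' : TOcc A n c1 i (j + t) := by
    refine ⟨o1.1, o1.2.1, o1.2.2.1, by omega, ?_⟩
    exact o1.2.2.2.2.trans step.symm
  have := hmax i (j + t) hocc'
  omega

/-- If two distinct contents share the canonical triple and there is a third smaller one,
we get three squares with the same rightmost occurrence: contradiction. -/
lemma fiber_pair {A : ℕ → ℕ → α} {n : ℕ} {c c' : ℕ × ℕ × (ℕ → ℕ → Option α)}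
    (hc : c ∈ TandemContents A n) (hc' : c' ∈ TandemContents A n)
    (eI : Ic A n c = Ic A n c') (eJ : Jc A n c = Jc A n c') (eh : c.1 = c'.1)
    (hlt : c.2.1 < c'.2.1)
    (hsm : ∃ c'' ∈ TandemContents A n, Ic A n c'' = Ic A n c ∧ Jc A n c'' = Jc A n c ∧
      c''.1 = c.1 ∧ c''.2.1 < c.2.1) : False := by
  obtain ⟨c'', hc'', fI, fJ, fh, flt⟩ := hsm
  have o1 : TOcc A n c'' (Ic A n c) (Jc A n c) := by
    have := occ_canon hc''
    rwa [fI, fJ] at this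
  have o2 : TOcc A n c (Ic A n c) (Jc A n c) := occ_canon hc
  have o3 : TOcc A n c' (Ic A n c) (Jc A n c) := by
    have := occ_canon hc'
    rwa [← eI, ← eJ] at this
  refine no_three A n c'' c c' (Ic A n c) (Jc A n c) hc'' hc hc' o1 o2 o3
    fh.symm (eh.symm.trans fh.symm) flt hlt ?_
  intro i' j' ho
  have := le_jc ho
  rwa [fJ] at this

/-- There is a constant `C > 0` such that every `n × n` 2D-string
(`n ≥ 1`) over any alphabet contains at most `C · n³` distinct tandems. -/
theorem distinct_tandems_upper_bound :
    ∃ C : ℝ, 0 < C ∧ ∀ (n : ℕ), 1 ≤ n → ∀ (α : Type*) (A : ℕ → ℕ → α),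
      ((TandemContents A n).ncard : ℝ) ≤ C * (n : ℝ) ^ 3 := by
  refine ⟨4, by norm_num, ?_⟩
  intro n hn α A
  classical
  set Ψ : (ℕ × ℕ × (ℕ → ℕ → Option α)) → ℕ × ℕ × ℕ × ℕ := fun c =>
    (Ic A n c, Jc A n c, c.1,
      if ∃ c' ∈ TandemContents A n, Ic A n c' = Ic A n c ∧ Jc A n c' = Jc A n c ∧
          c'.1 = c.1 ∧ c'.2.1 < c.2.1 then 1 else 0) with hΨ
  have hinj : Set.InjOn Ψ (TandemContents A n) := by
    intro c hc c' hc' heq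
    simp only [hΨ, Prod.mk.injEq] at heq
    obtain ⟨eI, eJ, eh, eb⟩ := heq
    by_contra hne
    have hwne : c.2.1 ≠ c'.2.1 := by
      intro hweq
      apply hne
      have e1 := (occ_canon hc).2.2.2.2
      have e2 := (occ_canon hc').2.2.2.2
      rw [e1, e2, eI, eJ, eh, hweq]
    rcases lt_or_gt_of_ne hwne with hlt | hgt
    · have hB' : ∃ c'' ∈ TandemContents A n, Ic A n c'' = Ic A n c' ∧
          Jc A n c'' = Jc A n c' ∧ c''.1 = c'.1 ∧ c''.2.1 < c'.2.1 :=
        ⟨c, hc, eI, eJ, eh, hlt⟩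
      by_cases hB : ∃ c'' ∈ TandemContents A n, Ic A n c'' = Ic A n c ∧
          Jc A n c'' = Jc A n c ∧ c''.1 = c.1 ∧ c''.2.1 < c.2.1
      · exact fiber_pair hc hc' eI eJ eh hlt hB
      · rw [if_neg hB, if_pos hB'] at eb
        omega
    · have hB : ∃ c'' ∈ TandemContents A n, Ic A n c'' = Ic A n c ∧
          Jc A n c'' = Jc A n c ∧ c''.1 = c.1 ∧ c''.2.1 < c.2.1 :=
        ⟨c', hc', eI.symm, eJ.symm, eh.symm, hgt⟩
      by_cases hB' : ∃ c'' ∈ TandemContents A n, Ic A n c'' = Ic A n c' ∧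
          Jc A n c'' = Jc A n c' ∧ c''.1 = c'.1 ∧ c''.2.1 < c'.2.1
      · exact fiber_pair hc' hc eI.symm eJ.symm eh.symm hgt hB'
      · rw [if_pos hB, if_neg hB'] at eb
        omega
  set T : Finset (ℕ × ℕ × ℕ × ℕ) :=
    Finset.range n ×ˢ Finset.range n ×ˢ Finset.range (n + 1) ×ˢ Finset.range 2 with hT
  have hsub : Ψ '' (TandemContents A n) ⊆ (T : Set (ℕ × ℕ × ℕ × ℕ)) := by
    rintro p ⟨c, hc, rfl⟩
    have oc := occ_canon hc
    simp only [hT, hΨ, Finset.coe_product, Set.mem_prod, Finset.mem_coe, Finset.mem_range]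
    refine ⟨?_, ?_, ?_, ?_⟩
    · have h1 := oc.2.2.1; have h2 := oc.1; omega
    · have h1 := oc.2.2.2.1; have h2 := oc.2.1; omega
    · have h1 := oc.2.2.1; omega
    · split <;> omega
  have hcard : (TandemContents A n).ncard ≤ n * (n * ((n + 1) * 2)) := by
    calc (TandemContents A n).ncard = (Ψ '' (TandemContents A n)).ncard :=
          (Set.ncard_image_of_injOn hinj).symm
      _ ≤ (T : Set (ℕ × ℕ × ℕ × ℕ)).ncard := Set.ncard_le_ncard hsub T.finite_toSet
      _ = T.card := Set.ncard_coe_finset T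
      _ = n * (n * ((n + 1) * 2)) := by
          simp [hT, Finset.card_product]
  have hnat : n * (n * ((n + 1) * 2)) ≤ 4 * n ^ 3 := by nlinarith [hn]
  have : ((TandemContents A n).ncard : ℝ) ≤ ((4 * n ^ 3 : ℕ) : ℝ) := by
    exact_mod_cast le_trans hcard hnat
  calc ((TandemContents A n).ncard : ℝ) ≤ ((4 * n ^ 3 : ℕ) : ℝ) := this
    _ = 4 * (n : ℝ) ^ 3 := by push_cast; ring

end Formal
end

section
/- For every integer n ≥ 1, the n×n 2D-string A over the alphabet {1,…,n} defined by A[i,j] = i for all 1 ≤ i,j ≤ n contains at least ⌊n/2⌋ · n(n+1)/2 distinct tandems (pairwise different as arrays). In particular, the maximal number of distinct tandems in an n×n 2D-string is Ω(n³). -/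
open scoped Classical

namespace Formal

variable {α : Type*}

/-- For every `n ≥ 1`, the `n × n` 2D-string whose `i`-th row is filled
with the letter `i` contains at least `⌊n/2⌋ · n(n+1)/2` distinct tandems; hence the
maximal number of distinct tandems in an `n × n` 2D-string is `Ω(n³)`. -/
theorem distinct_tandems_lower_bound (n : ℕ) (hn : 1 ≤ n) :
    n / 2 * (n * (n + 1) / 2) ≤
      (TandemContents (fun i _ : ℕ => i + 1) n).ncard := by
  classical
  set A : ℕ → ℕ → ℕ := fun i _ => i + 1 with hA
  set S : Finset (ℕ × Σ _ : ℕ, ℕ) :=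
    (Finset.Icc 1 (n / 2)) ×ˢ ((Finset.range n).sigma fun j => Finset.Iic j) with hS
  set f : (ℕ × Σ _ : ℕ, ℕ) → ℕ × ℕ × (ℕ → ℕ → Option ℕ) :=
    fun p => content A p.2.2 0 (p.2.1 - p.2.2 + 1) (2 * p.1) with hf
  have hsub : ↑(S.image f) ⊆ TandemContents A n := by
    intro c hc
    simp only [Finset.coe_image, Set.mem_image, Finset.mem_coe] at hc
    obtain ⟨⟨w, i2, i⟩, hp, rfl⟩ := hc
    simp only [hS, Finset.mem_product, Finset.mem_Icc, Finset.mem_sigma,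
      Finset.mem_range, Finset.mem_Iic] at hp
    obtain ⟨⟨hw1, hw2⟩, hi2, hi⟩ := hp
    have hwn : 2 * w ≤ n := by
      have := Nat.div_mul_le_self n 2
      omega
    refine ⟨i, 0, i2 - i + 1, w, by omega, by omega, by omega, by omega, ?_, rfl⟩
    intro x hx y hy
    simp only [hA]
    rw [Nat.mod_eq_of_lt (by omega : x < i2 - i + 1)]
  have hinj : Set.InjOn f ↑S := by
    rintro ⟨w, i2, i⟩ hp ⟨w', i2', i'⟩ hp' heq
    simp only [Finset.mem_coe, hS, Finset.mem_product, Finset.mem_Icc, Finset.mem_sigma,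
      Finset.mem_range, Finset.mem_Iic] at hp hp'
    obtain ⟨⟨hw1, hw2⟩, hi2, hi⟩ := hp
    obtain ⟨⟨hw1', hw2'⟩, hi2', hi'⟩ := hp'
    simp only [hf, content, Prod.mk.injEq] at heq
    obtain ⟨hh, hww, hg⟩ := heq
    have hg00 := congrFun (congrFun hg 0) 0
    simp only [hA] at hg00
    rw [if_pos (by omega), if_pos (by omega)] at hg00
    have hii : i = i' := by
      simpa using hg00
    have : w = w' := by omega
    have : i2 = i2' := by omega
    simp_all
  have hfin : (TandemContents A n).Finite := by
    have hsub2 : TandemContents A n ⊆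
        (fun q : ℕ × ℕ × ℕ × ℕ => content A q.1 q.2.1 q.2.2.1 q.2.2.2) ''
          (Set.Iic n ×ˢ Set.Iic n ×ˢ Set.Iic n ×ˢ Set.Iic n) := by
      rintro c ⟨i, j, h, w, h1, h2, h3, h4, _, rfl⟩
      refine ⟨(i, j, h, 2 * w), ?_, rfl⟩
      simp only [Set.mem_prod, Set.mem_Iic]
      omega
    exact (((Set.finite_Iic n).prod ((Set.finite_Iic n).prod
      ((Set.finite_Iic n).prod (Set.finite_Iic n)))).image _).subset hsub2
  have hcard : S.card = n / 2 * (n * (n + 1) / 2) := by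
    rw [hS, Finset.card_product, Finset.card_sigma]
    have h1 : (Finset.Icc 1 (n / 2)).card = n / 2 := by
      rw [Nat.card_Icc]
      omega
    have h2 : ∑ j ∈ Finset.range n, (Finset.Iic j).card
        = ∑ j ∈ Finset.range n, (j + 1) := by
      simp [Nat.card_Iic]
    have h3 : ∑ i ∈ Finset.range (n + 1), i = ∑ j ∈ Finset.range n, (j + 1) := by
      rw [Finset.sum_range_succ']
      simp
    have h4 : (∑ i ∈ Finset.range (n + 1), i) * 2 = (n + 1) * n :=
      Finset.sum_range_id_mul_two (n + 1)
    have h5 : ∑ j ∈ Finset.range n, (j + 1) = n * (n + 1) / 2 := by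
      rw [← h3, mul_comm n (n + 1), ← h4, Nat.mul_div_cancel _ (by norm_num)]
    rw [h1, h2, h5]
  calc n / 2 * (n * (n + 1) / 2) = S.card := hcard.symm
    _ = (S.image f).card := (Finset.card_image_of_injOn hinj).symm
    _ = (↑(S.image f) : Set _).ncard := (Set.ncard_coe_finset _).symm
    _ ≤ (TandemContents A n).ncard := Set.ncard_le_ncard hsub hfin

end Formal
end

section
/- There exists a constant C > 0 such that for every string S of length n ≥ 2, the sum over all runs R of S of the quantity (|R| − 2·per(R) + 1) is at most C · n · log₂ n. -/
open scoped Classical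

namespace Formal

variable {α : Type*}

section Aux

variable {β : Type*}

/-- Periodicity of `S` on `[0, n)`. -/
def PerN (S : ℕ → β) (n p : ℕ) : Prop := ∀ x, x + p < n → S x = S (x + p)

lemma perN_mono {S : ℕ → β} {n m p : ℕ} (h : PerN S n p) (hmn : m ≤ n) : PerN S m p :=
  fun x hx => h x (lt_of_lt_of_le hx hmn)

lemma perN_multiple {S : ℕ → β} {n g : ℕ} (h : PerN S n g) :
    ∀ (q : ℕ) (x : ℕ), x + q * g < n → S x = S (x + q * g) := by
  intro q
  induction q with
  | zero => intro x _; simp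
  | succ q ih =>
    intro x hx
    have hx' : x + g + q * g < n := by
      rw [show x + g + q * g = x + (q + 1) * g by ring]; exact hx
    have h1 : S x = S (x + g) := h x (by omega)
    have h2 : S (x + g) = S (x + g + q * g) := ih (x + g) hx'
    rw [h1, h2]; congr 1; ring

lemma perN_mod_shift {S : ℕ → β} {n g : ℕ} (h : PerN S n g) (x c : ℕ) (hx : x + c < n) :
    S (x % g + c) = S (x + c) := by
  have h2 : x % g + c + x / g * g = x + c := by
    rw [Nat.add_right_comm, Nat.mod_add_div']
  have h1 := perN_multiple h (x / g) (x % g + c) (by rw [h2]; exact hx)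
  rw [h2] at h1
  exact h1

lemma perN_mod {S : ℕ → β} {n g : ℕ} (h : PerN S n g) (x : ℕ) (hx : x < n) :
    S x = S (x % g) := by
  have := perN_mod_shift h x 0 (by omega)
  simpa using this.symm

/-- Weak Fine–Wilf theorem. -/
lemma fine_wilf : ∀ (m : ℕ) (S : ℕ → β) (n a b : ℕ), a + b ≤ m →
    PerN S n a → PerN S n b → a + b ≤ n → PerN S n (Nat.gcd a b) := by
  intro m
  induction m using Nat.strong_induction_on with
  | _ m ih =>
    intro S n a b hm ha hb hn
    rcases Nat.eq_zero_or_pos a with ha0 | ha0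
    · subst ha0; simpa using hb
    rcases Nat.eq_zero_or_pos b with hb0 | hb0
    · subst hb0; simpa using ha
    rcases lt_trichotomy a b with hab | hab | hab
    · -- a < b
      have hb' : PerN S (n - a) (b - a) := by
        intro x hx
        have e1 : S x = S (x + b) := hb x (by omega)
        have e2 : S (x + (b - a)) = S (x + (b - a) + a) := ha (x + (b - a)) (by omega)
        have e3 : x + (b - a) + a = x + b := by omega
        rw [e1, e2, e3]
      have ha' : PerN S (n - a) a := perN_mono ha (by omega)
      have hg' : PerN S (n - a) (Nat.gcd a (b - a)) := by
        refine ih b (by omega) S (n - a) a (b - a) (by omega) ha' hb' (by omega)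
      have hgeq : Nat.gcd a (b - a) = Nat.gcd a b := Nat.gcd_sub_self_right (le_of_lt hab)
      rw [hgeq] at hg'
      set g := Nat.gcd a b with hgdef
      have hgb : g ≤ b - a := Nat.le_of_dvd (by omega) (hgeq ▸ Nat.gcd_dvd_right a (b - a))
      intro x hx
      by_cases hcase : x + g < n - a
      · exact hg' x hcase
      · have hxa : a ≤ x := by omega
        have e1 : S (x - a) = S (x - a + a) := ha (x - a) (by omega)
        have e2 : S (x - a + g) = S (x - a + g + a) := ha (x - a + g) (by omega)
        have e3 : S (x - a) = S (x - a + g) := hg' (x - a) (by omega)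
        have e4 : x - a + a = x := by omega
        have e5 : x - a + g + a = x + g := by omega
        rw [e4] at e1; rw [e5] at e2
        rw [← e1, e3, e2]
    · subst hab
      simpa [Nat.gcd_self] using ha
    · -- b < a : symmetric
      have ha'' : PerN S (n - b) (a - b) := by
        intro x hx
        have e1 : S x = S (x + a) := ha x (by omega)
        have e2 : S (x + (a - b)) = S (x + (a - b) + b) := hb (x + (a - b)) (by omega)
        have e3 : x + (a - b) + b = x + a := by omega
        rw [e1, e2, e3]
      have hb' : PerN S (n - b) b := perN_mono hb (by omega)
      have hg' : PerN S (n - b) (Nat.gcd b (a - b)) := by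
        refine ih a (by omega) S (n - b) b (a - b) (by omega) hb' ha'' (by omega)
      have hgeq : Nat.gcd b (a - b) = Nat.gcd b a := Nat.gcd_sub_self_right (le_of_lt hab)
      rw [hgeq, Nat.gcd_comm b a] at hg'
      set g := Nat.gcd a b with hgdef
      have hgb : g ≤ a - b := by
        refine Nat.le_of_dvd (by omega) ?_
        have := Nat.gcd_dvd_right b (a - b)
        rwa [hgeq, Nat.gcd_comm b a] at this
      intro x hx
      by_cases hcase : x + g < n - b
      · exact hg' x hcase
      · have hxa : b ≤ x := by omega
        have e1 : S (x - b) = S (x - b + b) := hb (x - b) (by omega)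
        have e2 : S (x - b + g) = S (x - b + g + b) := hb (x - b + g) (by omega)
        have e3 : S (x - b) = S (x - b + g) := hg' (x - b) (by omega)
        have e4 : x - b + b = x := by omega
        have e5 : x - b + g + b = x + g := by omega
        rw [e4] at e1; rw [e5] at e2
        rw [← e1, e3, e2]

/-- Three squares at the same position, all with periods within a factor 2,
force a small divisor period on the first root. -/
lemma three_squares_s4 {S : ℕ → β} {p1 p2 p3 : ℕ}
    (h0 : 0 < p1) (h12 : p1 < p2) (h23 : p2 < p3) (h31 : p3 < 2 * p1)
    (P1 : PerN S (2 * p1) p1) (P2 : PerN S (2 * p2) p2) (P3 : PerN S (2 * p3) p3) :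
    ∃ h, 0 < h ∧ h < p1 ∧ h ∣ p1 ∧ PerN S p1 h := by
  set a := p2 - p1 with hadef
  set b := p3 - p2 with hbdef
  have ha0 : 0 < a := by omega
  have hb0 : 0 < b := by omega
  have hab : a + b < p1 := by omega
  have perA : PerN S p1 a := by
    intro i hi
    have e1 : S i = S (i + p2) := P2 i (by omega)
    have e2 : S (i + a) = S (i + a + p1) := P1 (i + a) (by omega)
    have e3 : i + a + p1 = i + p2 := by omega
    rw [e2, e3, ← e1]
  have perB : PerN S p2 b := by
    intro i hi
    have e1 : S i = S (i + p3) := P3 i (by omega)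
    have e2 : S (i + b) = S (i + b + p2) := P2 (i + b) (by omega)
    have e3 : i + b + p2 = i + p3 := by omega
    rw [e2, e3, ← e1]
  set g := Nat.gcd a b with hgdef
  have hga : g ≤ a := Nat.le_of_dvd ha0 (Nat.gcd_dvd_left a b)
  have hgb : g ≤ b := Nat.le_of_dvd hb0 (Nat.gcd_dvd_right a b)
  have hg0 : 0 < g := Nat.gcd_pos_of_pos_left _ ha0
  have perG : PerN S p1 g :=
    fine_wilf (a + b) S p1 a b le_rfl perA (perN_mono perB (by omega)) (by omega)
  set kk := p1 - b with hkkdef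
  have hkk0 : 0 < kk := by omega
  have border : ∀ j, j < a → S j = S (j + kk) := by
    intro j hj
    have e1 : S (j + kk) = S (j + kk + b) := perB (j + kk) (by omega)
    have e2 : j + kk + b = j + p1 := by omega
    have e3 : S j = S (j + p1) := P1 j (by omega)
    rw [e1, e2, ← e3]
  have perK : PerN S p1 kk := by
    intro j hj
    have hjb : j < b := by omega
    have e1 : S j = S (j % g) := perN_mod perG j (by omega)
    have e2 : S (j % g + kk) = S (j + kk) := perN_mod_shift perG j kk (by omega)
    have e3 : S (j % g) = S (j % g + kk) := border (j % g) (lt_of_lt_of_le (Nat.mod_lt j hg0) hga)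
    rw [e1, e3, e2]
  have perH : PerN S p1 (Nat.gcd g kk) :=
    fine_wilf (g + kk) S p1 g kk le_rfl perG perK (by omega)
  refine ⟨Nat.gcd g kk, ?_, ?_, ?_, perH⟩
  · exact Nat.gcd_pos_of_pos_left _ hg0
  · have : Nat.gcd g kk ≤ g := Nat.le_of_dvd hg0 (Nat.gcd_dvd_left g kk)
    omega
  · have d1 : Nat.gcd g kk ∣ b := dvd_trans (Nat.gcd_dvd_left g kk) (Nat.gcd_dvd_right a b)
    have d2 : Nat.gcd g kk ∣ kk := Nat.gcd_dvd_right g kk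
    have : Nat.gcd g kk ∣ kk + b := Nat.dvd_add d2 d1
    have e : kk + b = p1 := by omega
    rwa [e] at this

end Aux

section Runs

variable {β : Type*}

lemma fper_spec (S : ℕ → β) (i j : ℕ) :
    0 < fper S i j ∧ FPeriod S i j (fper S i j) := by
  have hne : {p | 0 < p ∧ FPeriod S i j p}.Nonempty :=
    ⟨j + 1, by omega, fun k hk hk2 => absurd hk2 (by omega)⟩
  exact Nat.sInf_mem hne

lemma fper_le {S : ℕ → β} {i j q : ℕ} (h0 : 0 < q) (hq : FPeriod S i j q) :
    fper S i j ≤ q := Nat.sInf_le ⟨h0, hq⟩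

lemma fperiod_multiple {S : ℕ → β} {i j p : ℕ} (hp : FPeriod S i j p) :
    ∀ (q : ℕ) (y : ℕ), i ≤ y → y + q * p ≤ j → S y = S (y + q * p) := by
  intro q
  induction q with
  | zero => intro y _ _; simp
  | succ q ih =>
    intro y hy hyq
    have hyq' : y + p + q * p ≤ j := by
      rw [show y + p + q * p = y + (q + 1) * p by ring]; exact hyq
    have h1 : S y = S (y + p) := hp y hy (by omega)
    have h2 : S (y + p) = S (y + p + q * p) := ih (y + p) (by omega) hyq'
    rw [h1, h2]; congr 1; ring

lemma mod_mul_helper (u m p h c : ℕ) (hc : p = h * c) : (u + m * p) % h = u % h := by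
  subst hc
  rw [show u + m * (h * c) = u + m * c * h by ring, Nat.add_mul_mod_self_right]

/-- A period `h < fper` on a window of length `fper` inside a run is impossible. -/
lemma run_min_period {S : ℕ → β} {n i j k h : ℕ}
    (hr : IsRun1D S n i j) (hik : i ≤ k) (hkj : k + 2 * fper S i j ≤ j + 1)
    (h0 : 0 < h) (hlt : h < fper S i j) (hdvd : h ∣ fper S i j)
    (hw : ∀ x, x + h < fper S i j → S (k + x) = S (k + x + h)) : False := by
  obtain ⟨hp0, hFP⟩ := fper_spec S i j
  set p := fper S i j with hpdef
  obtain ⟨hij, hjn, h2p, _, _⟩ := hr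
  -- window mod reduction
  have hwPer : PerN (fun x => S (k + x)) p h := by
    intro x hx
    have := hw x hx
    simpa [Nat.add_assoc] using this
  have Wmod : ∀ t, t < p → S (k + t) = S (k + t % h) := by
    intro t ht
    have := perN_mod hwPer t ht
    simpa using this
  -- transfer window to the left end of the run
  have climb : ∀ z, z < p → ∃ r m, r < p ∧ k + r = i + z + m * p ∧ S (i + z) = S (k + r) := by
    intro z hz
    set D := k + p - 1 - (i + z) with hDdef
    set m := D / p with hmdef
    have hDm : m * p + D % p = D := Nat.div_add_mod' D p
    have hDq : D % p < p := Nat.mod_lt _ hp0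
    have hle : i + z ≤ k + p - 1 := by omega
    have hA : k ≤ i + z + m * p := by omega
    have hB : i + z + m * p ≤ k + p - 1 := by omega
    have hend : i + z + m * p ≤ j := by omega
    refine ⟨i + z + m * p - k, m, by omega, by omega, ?_⟩
    have := fperiod_multiple hFP m (i + z) (by omega) hend
    rw [this]; congr 1; omega
  have Hw' : ∀ x, x + h < p → S (i + x) = S (i + x + h) := by
    intro x hx
    obtain ⟨r1, m1, hr1p, hr1eq, hr1S⟩ := climb x (by omega)
    obtain ⟨r2, m2, hr2p, hr2eq, hr2S⟩ := climb (x + h) (by omega)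
    obtain ⟨c, hc⟩ := hdvd
    have hmod : r1 % h = r2 % h := by
      have e1 : (k + r1) % h = (i + x) % h := by
        rw [hr1eq, mod_mul_helper _ _ _ _ _ hc]
      have e2 : (k + r2) % h = (i + x) % h := by
        rw [hr2eq, mod_mul_helper _ _ _ _ _ hc,
          show i + (x + h) = i + x + h by omega, Nat.add_mod_right]
      exact Nat.ModEq.add_left_cancel' k (e1.trans e2.symm)
    have w1 := Wmod r1 hr1p
    have w2 := Wmod r2 hr2p
    rw [show i + x + h = i + (x + h) by omega, hr1S, hr2S, w1, w2, hmod]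
  -- run-wide mod reduction from the left end
  have Rmod : ∀ t, i + t ≤ j → S (i + t) = S (i + t % h) := by
    intro t
    induction t using Nat.strong_induction_on with
    | _ t ih =>
      intro ht
      by_cases c1 : t < h
      · rw [Nat.mod_eq_of_lt c1]
      · by_cases c2 : t < p
        · have e1 : S (i + (t - h)) = S (i + (t - h) + h) := Hw' (t - h) (by omega)
          have e2 : i + (t - h) + h = i + t := by omega
          rw [e2] at e1
          have e3 := ih (t - h) (by omega) (by omega)
          rw [← e1, e3, Nat.mod_eq_sub_mod (by omega : h ≤ t)]
        · have e1 : S (i + (t - p)) = S (i + (t - p) + p) := hFP (i + (t - p)) (by omega) (by omega)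
          have e2 : i + (t - p) + p = i + t := by omega
          rw [e2] at e1
          have e3 := ih (t - p) (by omega) (by omega)
          obtain ⟨c, hc⟩ := hdvd
          have hcc : c * h = h * c := Nat.mul_comm c h
          have e4 : (t - p) % h = t % h := by
            conv_rhs => rw [show t = (t - p) + c * h by omega]
            rw [Nat.add_mul_mod_self_right]
          rw [← e1, e3, e4]
  -- conclude: h is a period of the whole run
  have hFPh : FPeriod S i j h := by
    intro x hx hxh
    have e1 : S x = S (i + (x - i) % h) := by
      have := Rmod (x - i) (by omega)
      rw [show i + (x - i) = x by omega] at this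
      exact this
    have e2 : S (x + h) = S (i + (x + h - i) % h) := by
      have := Rmod (x + h - i) (by omega)
      rw [show i + (x + h - i) = x + h by omega] at this
      exact this
    have e3 : (x + h - i) % h = (x - i) % h := by
      rw [show x + h - i = (x - i) + h by omega, Nat.add_mod_right]
    rw [e1, e2, e3]
  have := fper_le h0 hFPh
  omega

/-- Two runs with the same minimal period sharing a full square window are equal. -/
lemma runs_eq {S : ℕ → β} {n i1 j1 i2 j2 k : ℕ}
    (h1 : IsRun1D S n i1 j1) (h2 : IsRun1D S n i2 j2)
    (hp : fper S i1 j1 = fper S i2 j2)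
    (k1 : i1 ≤ k) (k1' : k + 2 * fper S i1 j1 ≤ j1 + 1)
    (k2 : i2 ≤ k) (k2' : k + 2 * fper S i2 j2 ≤ j2 + 1) :
    i1 = i2 ∧ j1 = j2 := by
  obtain ⟨hij1, hjn1, h2p1, hL1, hR1⟩ := h1
  obtain ⟨hij2, hjn2, h2p2, hL2, hR2⟩ := h2
  obtain ⟨hp01, hFP1⟩ := fper_spec S i1 j1
  obtain ⟨hp02, hFP2⟩ := fper_spec S i2 j2
  have hi : ¬ i2 < i1 := by
    intro hlt
    refine hL1 (by omega) ?_
    rw [hp]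
    exact hFP2 (i1 - 1) (by omega) (by omega)
  have hi' : ¬ i1 < i2 := by
    intro hlt
    refine hL2 (by omega) ?_
    rw [← hp]
    exact hFP1 (i2 - 1) (by omega) (by omega)
  have hj : ¬ j1 < j2 := by
    intro hlt
    refine hR1 (by omega) ?_
    rw [hp]
    have e := hFP2 (j1 + 1 - fper S i2 j2) (by omega) (by omega)
    rw [show j1 + 1 - fper S i2 j2 + fper S i2 j2 = j1 + 1 by omega] at e
    exact e.symm
  have hj' : ¬ j2 < j1 := by
    intro hlt
    refine hR2 (by omega) ?_
    rw [← hp]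
    have e := hFP1 (j2 + 1 - fper S i1 j1) (by omega) (by omega)
    rw [show j2 + 1 - fper S i1 j1 + fper S i1 j1 = j2 + 1 by omega] at e
    exact e.symm
  omega

end Runs

section Main

variable {β : Type*}

lemma square_at {S : ℕ → β} {n i j b : ℕ} (hr : IsRun1D S n i j)
    (hb : i ≤ b) (hb2 : b + 2 * fper S i j ≤ j + 1) :
    PerN (fun x => S (b + x)) (2 * fper S i j) (fper S i j) := by
  obtain ⟨hp0, hFP⟩ := fper_spec S i j
  intro x hx
  have e := hFP (b + x) (by omega) (by omega)
  simpa [Nat.add_assoc] using e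

lemma key_count (S : ℕ → β) (n : ℕ) (hn : 2 ≤ n) :
    ∑ t ∈ (Finset.range n ×ˢ Finset.range n).filter (fun t => IsRun1D S n t.1 t.2),
      ((t.2 - t.1 + 1) - 2 * fper S t.1 t.2 + 1) ≤ 2 * (n * (Nat.log 2 n + 1)) := by
  classical
  set R := (Finset.range n ×ˢ Finset.range n).filter (fun t => IsRun1D S n t.1 t.2) with hR
  have hrun : ∀ t ∈ R, IsRun1D S n t.1 t.2 := by
    intro t ht; exact (Finset.mem_filter.mp ht).2
  have step1 : ∀ t ∈ R, (t.2 - t.1 + 1) - 2 * fper S t.1 t.2 + 1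
      = ((Finset.range n).filter (fun b => t.1 ≤ b ∧ b + 2 * fper S t.1 t.2 ≤ t.2 + 1)).card := by
    intro t ht
    obtain ⟨hij, hjn, h2p, -, -⟩ := hrun t ht
    obtain ⟨hp0, -⟩ := fper_spec S t.1 t.2
    have e : (Finset.range n).filter (fun b => t.1 ≤ b ∧ b + 2 * fper S t.1 t.2 ≤ t.2 + 1)
        = Finset.Ico t.1 (t.2 + 2 - 2 * fper S t.1 t.2) := by
      ext b
      simp only [Finset.mem_filter, Finset.mem_range, Finset.mem_Ico]
      omega
    rw [e, Nat.card_Ico]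
    omega
  rw [Finset.sum_congr rfl step1]
  have swap : ∑ t ∈ R, ((Finset.range n).filter
        (fun b => t.1 ≤ b ∧ b + 2 * fper S t.1 t.2 ≤ t.2 + 1)).card
      = ∑ b ∈ Finset.range n,
        (R.filter (fun t => t.1 ≤ b ∧ b + 2 * fper S t.1 t.2 ≤ t.2 + 1)).card := by
    simp only [Finset.card_filter]
    exact Finset.sum_comm
  rw [swap]
  have bound : ∀ b ∈ Finset.range n,
      (R.filter (fun t => t.1 ≤ b ∧ b + 2 * fper S t.1 t.2 ≤ t.2 + 1)).card
        ≤ 2 * (Nat.log 2 n + 1) := by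
    intro b _
    set F := R.filter (fun t => t.1 ≤ b ∧ b + 2 * fper S t.1 t.2 ≤ t.2 + 1) with hF
    have hmemF : ∀ t ∈ F, IsRun1D S n t.1 t.2 ∧ t.1 ≤ b ∧ b + 2 * fper S t.1 t.2 ≤ t.2 + 1 := by
      intro t ht
      have h1 := Finset.mem_filter.mp ht
      exact ⟨(Finset.mem_filter.mp h1.1).2, h1.2⟩
    have hfib : ∀ t ∈ F, Nat.log 2 (fper S t.1 t.2) ∈ Finset.range (Nat.log 2 n + 1) := by
      intro t ht
      obtain ⟨⟨hij, hjn, h2p, -, -⟩, -, -⟩ := hmemF t ht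
      have : fper S t.1 t.2 ≤ n := by omega
      simp only [Finset.mem_range]
      have := Nat.log_mono_right (b := 2) this
      omega
    rw [Finset.card_eq_sum_card_fiberwise hfib]
    have fiber2 : ∀ ℓ ∈ Finset.range (Nat.log 2 n + 1),
        (F.filter (fun t => Nat.log 2 (fper S t.1 t.2) = ℓ)).card ≤ 2 := by
      intro ℓ _
      by_contra hgt
      push_neg at hgt
      obtain ⟨t1, t2, t3, m1, m2, m3, ne12, ne13, ne23⟩ := Finset.two_lt_card_iff.mp hgt
      -- package facts
      have unpack : ∀ t, t ∈ F.filter (fun t => Nat.log 2 (fper S t.1 t.2) = ℓ) →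
          IsRun1D S n t.1 t.2 ∧ t.1 ≤ b ∧ b + 2 * fper S t.1 t.2 ≤ t.2 + 1 ∧
            Nat.log 2 (fper S t.1 t.2) = ℓ := by
        intro t ht
        have h1 := Finset.mem_filter.mp ht
        obtain ⟨ha, hb', hc⟩ := hmemF t h1.1
        exact ⟨ha, hb', hc, h1.2⟩
      have u1 := unpack t1 m1
      have u2 := unpack t2 m2
      have u3 := unpack t3 m3
      -- distinct periods
      have pdist : ∀ ta tb : ℕ × ℕ,
          (IsRun1D S n ta.1 ta.2 ∧ ta.1 ≤ b ∧ b + 2 * fper S ta.1 ta.2 ≤ ta.2 + 1 ∧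
            Nat.log 2 (fper S ta.1 ta.2) = ℓ) →
          (IsRun1D S n tb.1 tb.2 ∧ tb.1 ≤ b ∧ b + 2 * fper S tb.1 tb.2 ≤ tb.2 + 1 ∧
            Nat.log 2 (fper S tb.1 tb.2) = ℓ) →
          fper S ta.1 ta.2 = fper S tb.1 tb.2 → ta = tb := by
        intro ta tb ⟨ra, ba, wa, _⟩ ⟨rb, bb, wb, _⟩ hpe
        obtain ⟨e1, e2⟩ := runs_eq ra rb hpe ba wa bb wb
        exact Prod.ext e1 e2
      -- the three-squares contradiction, sorted version
      have bad : ∀ ta tb tc : ℕ × ℕ,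
          (IsRun1D S n ta.1 ta.2 ∧ ta.1 ≤ b ∧ b + 2 * fper S ta.1 ta.2 ≤ ta.2 + 1 ∧
            Nat.log 2 (fper S ta.1 ta.2) = ℓ) →
          (IsRun1D S n tb.1 tb.2 ∧ tb.1 ≤ b ∧ b + 2 * fper S tb.1 tb.2 ≤ tb.2 + 1 ∧
            Nat.log 2 (fper S tb.1 tb.2) = ℓ) →
          (IsRun1D S n tc.1 tc.2 ∧ tc.1 ≤ b ∧ b + 2 * fper S tc.1 tc.2 ≤ tc.2 + 1 ∧
            Nat.log 2 (fper S tc.1 tc.2) = ℓ) →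
          fper S ta.1 ta.2 < fper S tb.1 tb.2 →
          fper S tb.1 tb.2 < fper S tc.1 tc.2 → False := by
        intro ta tb tc ⟨ra, ba, wa, la⟩ ⟨rb, bb, wb, _lb⟩ ⟨rc, bc, wc, lc⟩ hab hbc
        set pa := fper S ta.1 ta.2
        set pb := fper S tb.1 tb.2
        set pc := fper S tc.1 tc.2
        obtain ⟨hpa0, -⟩ := fper_spec S ta.1 ta.2
        obtain ⟨hpc0, -⟩ := fper_spec S tc.1 tc.2
        have h2 : pc < 2 * pa := by
          have e1 : pc < 2 ^ (Nat.log 2 pc + 1) := by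
            have := Nat.lt_pow_succ_log_self (by norm_num : 1 < 2) pc
            simpa [Nat.succ_eq_add_one] using this
          have e2 : 2 ^ (Nat.log 2 pa) ≤ pa := Nat.pow_log_le_self 2 (by omega)
          rw [la] at e2
          rw [lc] at e1
          calc pc < 2 ^ (ℓ + 1) := e1
            _ = 2 * 2 ^ ℓ := by ring
            _ ≤ 2 * pa := by omega
        have Pa := square_at ra ba wa
        have Pb := square_at rb bb wb
        have Pc := square_at rc bc wc
        obtain ⟨h, hh0, hhlt, hhdvd, hper⟩ := three_squares_s4 hpa0 hab hbc h2 Pa Pb Pc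
        refine run_min_period ra ba wa hh0 hhlt hhdvd ?_
        intro x hx
        have := hper x hx
        simpa [Nat.add_assoc] using this
      -- sort the three periods
      have d12 : fper S t1.1 t1.2 ≠ fper S t2.1 t2.2 := fun h => ne12 (pdist t1 t2 u1 u2 h)
      have d13 : fper S t1.1 t1.2 ≠ fper S t3.1 t3.2 := fun h => ne13 (pdist t1 t3 u1 u3 h)
      have d23 : fper S t2.1 t2.2 ≠ fper S t3.1 t3.2 := fun h => ne23 (pdist t2 t3 u2 u3 h)
      rcases Nat.lt_or_ge (fper S t1.1 t1.2) (fper S t2.1 t2.2) with o12 | o12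
      · rcases Nat.lt_or_ge (fper S t2.1 t2.2) (fper S t3.1 t3.2) with o23 | o23
        · exact bad t1 t2 t3 u1 u2 u3 o12 o23
        · rcases Nat.lt_or_ge (fper S t1.1 t1.2) (fper S t3.1 t3.2) with o13 | o13
          · exact bad t1 t3 t2 u1 u3 u2 o13 (by omega)
          · exact bad t3 t1 t2 u3 u1 u2 (by omega) o12
      · rcases Nat.lt_or_ge (fper S t1.1 t1.2) (fper S t3.1 t3.2) with o13 | o13
        · exact bad t2 t1 t3 u2 u1 u3 (by omega) o13
        · rcases Nat.lt_or_ge (fper S t2.1 t2.2) (fper S t3.1 t3.2) with o23 | o23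
          · exact bad t2 t3 t1 u2 u3 u1 o23 (by omega)
          · exact bad t3 t2 t1 u3 u2 u1 (by omega) (by omega)
    calc ∑ ℓ ∈ Finset.range (Nat.log 2 n + 1),
          (F.filter (fun t => Nat.log 2 (fper S t.1 t.2) = ℓ)).card
        ≤ ∑ _ℓ ∈ Finset.range (Nat.log 2 n + 1), 2 := Finset.sum_le_sum fiber2
      _ = 2 * (Nat.log 2 n + 1) := by
          rw [Finset.sum_const, Finset.card_range, smul_eq_mul]; ring
  calc ∑ b ∈ Finset.range n,
        (R.filter (fun t => t.1 ≤ b ∧ b + 2 * fper S t.1 t.2 ≤ t.2 + 1)).card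
      ≤ ∑ _b ∈ Finset.range n, 2 * (Nat.log 2 n + 1) := Finset.sum_le_sum bound
    _ = 2 * (n * (Nat.log 2 n + 1)) := by
        rw [Finset.sum_const, Finset.card_range, smul_eq_mul]; ring

end Main

/-- There is a constant `C > 0` such that for every string `S` of
length `n ≥ 2`, the sum over all runs `R` of `S` of `|R| − 2·per(R) + 1` is at most
`C · n · log₂ n`. -/
theorem sum_run_excess_upper_bound :
    ∃ C : ℝ, 0 < C ∧ ∀ (n : ℕ), 2 ≤ n → ∀ (α : Type*) (S : ℕ → α),
      ((∑ t ∈ (Finset.range n ×ˢ Finset.range n).filter (fun t => IsRun1D S n t.1 t.2),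
          ((t.2 - t.1 + 1) - 2 * fper S t.1 t.2 + 1) : ℕ) : ℝ) ≤
        C * (n : ℝ) * Real.logb 2 n := by
  refine ⟨4, by norm_num, ?_⟩
  intro n hn γ S
  have hnat := key_count S n hn
  have hlogb1 : (1 : ℝ) ≤ Real.logb 2 n := by
    rw [show (1 : ℝ) = Real.logb 2 2 from (Real.logb_self_eq_one (by norm_num)).symm]
    apply (Real.logb_le_logb (by norm_num) (by norm_num) (by positivity)).mpr
    exact_mod_cast hn
  have hlogb2 : (Nat.log 2 n : ℝ) ≤ Real.logb 2 n := by
    have h1 : ((2 : ℕ) ^ Nat.log 2 n : ℕ) ≤ n := Nat.pow_log_le_self 2 (by omega)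
    have h2 : ((2 : ℝ) ^ Nat.log 2 n) ≤ (n : ℝ) := by exact_mod_cast h1
    have h3 : Real.logb 2 ((2 : ℝ) ^ Nat.log 2 n) ≤ Real.logb 2 n := by
      apply (Real.logb_le_logb (by norm_num) (by positivity) (by positivity)).mpr h2
    rwa [Real.logb_pow, Real.logb_self_eq_one (by norm_num), mul_one] at h3
  have hcast : ((∑ t ∈ (Finset.range n ×ˢ Finset.range n).filter
        (fun t => IsRun1D S n t.1 t.2),
        ((t.2 - t.1 + 1) - 2 * fper S t.1 t.2 + 1) : ℕ) : ℝ)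
      ≤ (2 * (n * (Nat.log 2 n + 1)) : ℕ) := by exact_mod_cast hnat
  refine hcast.trans ?_
  push_cast
  have hn0 : (0 : ℝ) ≤ (n : ℝ) := by positivity
  nlinarith [mul_nonneg hn0 (by linarith : (0:ℝ) ≤ Real.logb 2 n - 1),
    mul_nonneg hn0 (by linarith : (0:ℝ) ≤ Real.logb 2 n - (Nat.log 2 n : ℝ))]


end Formal
end

section
/- There exists a constant C > 0 such that for every string S of length n ≥ 2 and every position a of S, the number of primitive strings U such that the square U² occurs in S starting at position a (i.e., S[a..a+2|U|−1] = U²) is at most C · log₂ n. -/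
open scoped Classical

namespace Formal

variable {α : Type*}

private lemma per_struct {β : Type*} (S : ℕ → β) (a p L : ℕ) (hp : 0 < p)
    (hper : ∀ y, y + p < L → S (a + y) = S (a + (y + p))) :
    ∀ y, y < L → S (a + y) = S (a + y % p) := by
  intro y
  induction y using Nat.strong_induction_on with
  | _ y ih =>
    intro hy
    rcases lt_or_ge y p with h | h
    · rw [Nat.mod_eq_of_lt h]
    · have h2 := hper (y - p) (by omega)
      have e : y - p + p = y := by omega
      rw [e] at h2
      calc S (a + y) = S (a + (y - p)) := h2.symm
        _ = S (a + (y - p) % p) := ih (y - p) (by omega) (by omega)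
        _ = S (a + y % p) := by rw [← Nat.mod_eq_sub_mod h]

private lemma key_three_squares {β : Type*} (S : ℕ → β) (a ℓ1 ℓ2 ℓ3 : ℕ)
    (h12 : ℓ1 < ℓ2) (h23 : ℓ2 < ℓ3) (h31 : ℓ3 < 2 * ℓ1)
    (hA : ∀ x < ℓ1, S (a + x) = S (a + ℓ1 + x))
    (hB : ∀ x < ℓ2, S (a + x) = S (a + ℓ2 + x))
    (hC : ∀ x < ℓ3, S (a + x) = S (a + ℓ3 + x))
    (hprim : PrimitiveF S a ℓ1) : False := by
  set d := ℓ2 - ℓ1 with hd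
  set e := ℓ3 - ℓ2 with he
  have hd1 : 0 < d := by omega
  have he1 : 0 < e := by omega
  have hde : d + e + ℓ1 = ℓ3 := by omega
  -- `e` is a period of `U₂ = S[a..a+ℓ2)`
  have hePer : ∀ y, y + e < ℓ2 → S (a + y) = S (a + (y + e)) := by
    intro y hy
    have b1 := hB (y + e) (by omega)
    have c1 := hC y (by omega)
    have eq1 : a + ℓ2 + (y + e) = a + ℓ3 + y := by omega
    rw [eq1] at b1
    rw [c1]; exact b1.symm
  set P := {q | 0 < q ∧ ∀ y, y + q < ℓ2 → S (a + y) = S (a + (y + q))} with hP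
  have hne : e ∈ P := ⟨he1, hePer⟩
  set p := sInf P with hpdef
  have hpmem : p ∈ P := Nat.sInf_mem ⟨e, hne⟩
  have hppos : 0 < p := hpmem.1
  have hpPer := hpmem.2
  have hpe : p ≤ e := Nat.sInf_le hne
  have hpd : p + d < ℓ1 := by omega
  have struct : ∀ y, y < ℓ2 → S (a + y) = S (a + y % p) :=
    per_struct S a p ℓ2 hppos hpPer
  have hndvd : ¬ p ∣ ℓ1 := by
    intro hdvd
    have := hprim.2 p hppos hdvd (fun x hx => hpPer x (by omega))
    omega
  have rotfalse : ∀ δ, ¬ p ∣ δ →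
      (∀ z, z < p → S (a + z) = S (a + (z + δ) % p)) → False := by
    intro δ hδ hrot
    have hδ1 : 0 < δ % p := by
      rcases Nat.eq_zero_or_pos (δ % p) with h | h
      · exact absurd (Nat.dvd_iff_mod_eq_zero.2 h) hδ
      · exact h
    have hδ2 : δ % p < p := Nat.mod_lt _ hppos
    have hmem : δ % p ∈ P := by
      refine ⟨hδ1, fun y hy => ?_⟩
      have s1 := struct y (by omega)
      have s2 := hrot (y % p) (Nat.mod_lt _ hppos)
      have s3 := struct (y + δ % p) hy
      have m1 : (y % p + δ) % p = (y + δ % p) % p := by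
        rw [Nat.mod_add_mod, Nat.add_mod_mod]
      rw [m1] at s2
      rw [s1, s2]; exact s3.symm
    have := Nat.sInf_le hmem
    omega
  by_cases hdd : p ∣ d
  · -- rotation by ℓ1
    have hple : p ≤ d := Nat.le_of_dvd hd1 hdd
    refine rotfalse ℓ1 hndvd (fun z hz => ?_)
    have a1 := hA z (by omega)
    have eq1 : a + ℓ1 + z = a + (z + ℓ1) := by omega
    rw [eq1] at a1
    have s1 := struct (z + ℓ1) (by omega)
    rw [a1]; exact s1
  · -- rotation by d
    refine rotfalse d hdd (fun z hz => ?_)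
    have b1 := hB z (by omega)
    have a1 := hA (z + d) (by omega)
    have eq1 : a + ℓ2 + z = a + ℓ1 + (z + d) := by omega
    rw [eq1] at b1
    have s1 := struct (z + d) (by omega)
    rw [b1, ← a1]; exact s1

/-- There is a constant `C > 0` such that for every string `S` of
length `n ≥ 2` and every position `a` of `S`, at most `C · log₂ n` primitively rooted
squares `U²` occur in `S` starting at position `a` (equivalently, there are at most
`C · log₂ n` lengths `ℓ = |U|`, since `U = S[a..a+ℓ−1]`). -/
theorem primitively_rooted_squares_at_position :
    ∃ C : ℝ, 0 < C ∧ ∀ (n : ℕ), 2 ≤ n → ∀ (α : Type*) (S : ℕ → α), ∀ a < n,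
      (({ℓ : ℕ | 0 < ℓ ∧ a + 2 * ℓ ≤ n ∧ (∀ x < ℓ, S (a + x) = S (a + ℓ + x)) ∧
          PrimitiveF S a ℓ}).ncard : ℝ) ≤ C * Real.logb 2 n := by
  refine ⟨4, by norm_num, ?_⟩
  intro n hn α S a ha
  set L := {ℓ : ℕ | 0 < ℓ ∧ a + 2 * ℓ ≤ n ∧ (∀ x < ℓ, S (a + x) = S (a + ℓ + x)) ∧
      PrimitiveF S a ℓ} with hLdef
  have hsub : L ⊆ Set.Iio n := by
    intro ℓ hℓ
    have h1 := hℓ.1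
    have h2 := hℓ.2.1
    simp only [Set.mem_Iio]
    omega
  have hfin : L.Finite := (Set.finite_Iio n).subset hsub
  have no3 : ∀ x ∈ L, ∀ y ∈ L, ∀ z ∈ L, x < y → y < z → z < 2 * x → False := by
    intro x hx y hy z hz h1 h2 h3
    exact key_three_squares S a x y z h1 h2 h3 hx.2.2.1 hy.2.2.1 hz.2.2.1 hx.2.2.2
  set F := hfin.toFinset with hF
  have hmemF : ∀ ℓ, ℓ ∈ F ↔ ℓ ∈ L := fun ℓ => hfin.mem_toFinset
  have fiber : ∀ k ∈ F.image (Nat.log 2), (F.filter fun ℓ => Nat.log 2 ℓ = k).card ≤ 2 := by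
    intro k _
    by_contra hcon
    push_neg at hcon
    obtain ⟨x, y, z, hx, hy, hz, hxy, hxz, hyz⟩ := Finset.two_lt_card_iff.1 hcon
    simp only [Finset.mem_filter] at hx hy hz
    have hxL : x ∈ L := (hmemF x).1 hx.1
    have hyL : y ∈ L := (hmemF y).1 hy.1
    have hzL : z ∈ L := (hmemF z).1 hz.1
    have hx1 : 2 ^ k ≤ x := by
      rw [← hx.2]; exact Nat.pow_log_le_self 2 (by have := hxL.1; omega)
    have hy1 : 2 ^ k ≤ y := by
      rw [← hy.2]; exact Nat.pow_log_le_self 2 (by have := hyL.1; omega)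
    have hz1 : 2 ^ k ≤ z := by
      rw [← hz.2]; exact Nat.pow_log_le_self 2 (by have := hzL.1; omega)
    have hx2 : x < 2 ^ (k + 1) := by
      rw [← hx.2]; exact Nat.lt_pow_succ_log_self one_lt_two x
    have hy2 : y < 2 ^ (k + 1) := by
      rw [← hy.2]; exact Nat.lt_pow_succ_log_self one_lt_two y
    have hz2 : z < 2 ^ (k + 1) := by
      rw [← hz.2]; exact Nat.lt_pow_succ_log_self one_lt_two z
    have hpow : 2 ^ (k + 1) = 2 * 2 ^ k := by ring
    have key2 : ∀ u v w : ℕ, u ∈ L → v ∈ L → w ∈ L → u < v → v < w →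
        2 ^ k ≤ u → w < 2 ^ (k + 1) → False := by
      intro u v w hu hv hw h1 h2 h3 h4
      exact no3 u hu v hv w hw h1 h2 (by omega)
    rcases hxy.lt_or_gt with h1 | h1
    · rcases hyz.lt_or_gt with h2 | h2
      · exact key2 x y z hxL hyL hzL h1 h2 hx1 hz2
      · rcases hxz.lt_or_gt with h3 | h3
        · exact key2 x z y hxL hzL hyL h3 h2 hx1 hy2
        · exact key2 z x y hzL hxL hyL h3 h1 hz1 hy2
    · rcases hxz.lt_or_gt with h2 | h2
      · exact key2 y x z hyL hxL hzL h1 h2 hy1 hz2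
      · rcases hyz.lt_or_gt with h3 | h3
        · exact key2 y z x hyL hzL hxL h3 h2 hy1 hx2
        · exact key2 z y x hzL hyL hxL h3 h1 hz1 hx2
  have hcard : F.card ≤ 2 * (F.image (Nat.log 2)).card :=
    Finset.card_le_mul_card_image F 2 fiber
  have himg : (F.image (Nat.log 2)).card ≤ Nat.log 2 n + 1 := by
    have hss : F.image (Nat.log 2) ⊆ Finset.range (Nat.log 2 n + 1) := by
      intro k hk
      simp only [Finset.mem_image] at hk
      obtain ⟨ℓ, hℓ, rfl⟩ := hk
      have hℓL := (hmemF ℓ).1 hℓ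
      have hle : ℓ ≤ n := by have := hℓL.2.1; omega
      simp only [Finset.mem_range]
      exact Nat.lt_succ_of_le (Nat.log_mono_right hle)
    simpa using Finset.card_le_card hss
  have hncard : L.ncard = F.card := Set.ncard_eq_toFinset_card L hfin
  have hcount : L.ncard ≤ 2 * (Nat.log 2 n + 1) := by omega
  -- real arithmetic
  have hn0 : (0 : ℝ) < (n : ℝ) := by positivity
  have hlog1 : (1 : ℝ) ≤ Real.logb 2 n := by
    rw [Real.le_logb_iff_rpow_le (by norm_num) hn0]
    rw [Real.rpow_one]
    exact_mod_cast hn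
  have hlogk : (Nat.log 2 n : ℝ) ≤ Real.logb 2 n := by
    rw [Real.le_logb_iff_rpow_le (by norm_num) hn0]
    rw [Real.rpow_natCast]
    exact_mod_cast Nat.pow_log_le_self 2 (by omega)
  have hc : (L.ncard : ℝ) ≤ 2 * ((Nat.log 2 n : ℝ) + 1) := by
    exact_mod_cast hcount
  calc (L.ncard : ℝ) ≤ 2 * ((Nat.log 2 n : ℝ) + 1) := hc
    _ ≤ 2 * (Real.logb 2 n + Real.logb 2 n) := by nlinarith
    _ = 4 * Real.logb 2 n := by ring

end Formal
end

section
/- Let A be an n×n 2D-string, let R = A[i1..i2, j1..j2] be a 2D-run of A, and let k = ⌊log₂(i2−i1+1)⌋. Then there exists a horizontal run R' of A of height 2^k with hper(R') = hper(R) and width(R') ≥ width(R) whose top-left or bottom-left corner coincides with that of R; that is, R' = A[i1..i1+2^k−1, j1..j'] or R' = A[i2−2^k+1..i2, j1..j'] for some j' ≥ j2. -/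
open scoped Classical

namespace Formal

variable {α : Type*}

/-! ### Auxiliary lemmas for Statement 7 -/

lemma hper_set_nonempty (A : ℕ → ℕ → α) (i j r c : ℕ) :
    {p | 0 < p ∧ HPeriod A i j r c p}.Nonempty :=
  ⟨c + 1, Nat.succ_pos c, fun _ _ y hy => absurd hy (by omega)⟩

lemma hper_mem (A : ℕ → ℕ → α) (i j r c : ℕ) :
    0 < hper A i j r c ∧ HPeriod A i j r c (hper A i j r c) :=
  Nat.sInf_mem (hper_set_nonempty A i j r c)

lemma vper_set_nonempty (A : ℕ → ℕ → α) (i j r c : ℕ) :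
    {q | 0 < q ∧ VPeriod A i j r c q}.Nonempty :=
  ⟨r + 1, Nat.succ_pos r, fun _ _ x hx => absurd hx (by omega)⟩

lemma vper_mem (A : ℕ → ℕ → α) (i j r c : ℕ) :
    0 < vper A i j r c ∧ VPeriod A i j r c (vper A i j r c) :=
  Nat.sInf_mem (vper_set_nonempty A i j r c)

/-- Restriction of a horizontal period to a subwindow. -/
lemma HPeriod.sub {A : ℕ → ℕ → α} {i j r c p : ℕ} (h : HPeriod A i j r c p)
    (d r' c' : ℕ) (hd : d + r' ≤ r) (hc : c' ≤ c) : HPeriod A (i + d) j r' c' p := by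
  intro x hx y hy
  have := h (d + x) (by omega) y (by omega)
  simpa [Nat.add_assoc] using this

/-- Dropping the first column of a horizontally periodic window. -/
lemma HPeriod.shift {A : ℕ → ℕ → α} {i j r c p : ℕ} (h : HPeriod A i (j - 1) r c p)
    (hj : 0 < j) : HPeriod A i j r (c - 1) p := by
  intro x hx y hy
  have h1 := h x hx (y + 1) (by omega)
  have e1 : j - 1 + (y + 1) = j + y := by omega
  have e2 : j - 1 + (y + 1 + p) = j + (y + p) := by omega
  rw [e1, e2] at h1
  exact h1

/-- Dropping the first column of a vertically periodic window. -/
lemma VPeriod.shift {A : ℕ → ℕ → α} {i j r c q : ℕ} (h : VPeriod A i (j - 1) r c q)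
    (hj : 0 < j) : VPeriod A i j r (c - 1) q := by
  intro y hy x hx
  have h1 := h (y + 1) (by omega) x hx
  have e1 : j - 1 + (y + 1) = j + y := by omega
  rw [e1] at h1
  exact h1

/-- Iterating a vertical period. -/
lemma VPeriod.iter {A : ℕ → ℕ → α} {i j r c q : ℕ} (hV : VPeriod A i j r c q) :
    ∀ t x, x + t * q < r → ∀ y < c, A (i + x) (j + y) = A (i + (x + t * q)) (j + y) := by
  intro t
  induction t with
  | zero => simp
  | succ t ih =>
    intro x hx y hy
    have e : (t + 1) * q = t * q + q := Nat.succ_mul t q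
    have h1 := ih x (by omega) y hy
    have h2 := hV y hy (x + t * q) (by omega)
    rw [h1, h2]
    congr 2
    omega

/-- Every row of a vertically periodic window equals the row `x % q` of the window. -/
lemma rowRepr_top {A : ℕ → ℕ → α} {i j r c q : ℕ} (hq : 0 < q)
    (hV : VPeriod A i j r c q) :
    ∀ x < r, ∀ y < c, A (i + x) (j + y) = A (i + x % q) (j + y) := by
  intro x hx y hy
  have e : x % q + x / q * q = x := Nat.mod_add_div' x q
  have h1 := hV.iter (x / q) (x % q) (by omega) y hy
  rw [e] at h1
  exact h1.symm

/-- Every row of a vertically periodic window equals some row among the bottom `q` rows. -/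
lemma rowRepr_bot {A : ℕ → ℕ → α} {i j r c q : ℕ} (hq : 0 < q)
    (hV : VPeriod A i j r c q) :
    ∀ x < r, ∃ x', x' < r ∧ r ≤ x' + q ∧
      ∀ y < c, A (i + x) (j + y) = A (i + x') (j + y) := by
  intro x hx
  set t := (r - 1 - x) / q with ht
  have hm : (r - 1 - x) % q + t * q = r - 1 - x := Nat.mod_add_div' (r - 1 - x) q
  have hmlt : (r - 1 - x) % q < q := Nat.mod_lt _ hq
  refine ⟨x + t * q, by omega, by omega, ?_⟩
  intro y hy
  exact hV.iter t x (by omega) y hy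

/-- The smallest horizontal period of a suitable top band equals that of the whole window. -/
lemma hper_top_band {A : ℕ → ℕ → α} {i j r c h : ℕ} (hh : h ≤ r)
    (hqh : vper A i j r c ≤ h) :
    hper A i j h c = hper A i j r c := by
  have hq := vper_mem A i j r c
  apply le_antisymm
  · refine Nat.sInf_le ⟨(hper_mem A i j r c).1, ?_⟩
    have h1 := (hper_mem A i j r c).2.sub 0 h c (by omega) le_rfl
    simpa using h1
  · refine Nat.sInf_le ⟨(hper_mem A i j h c).1, ?_⟩
    intro x hx y hy
    rw [rowRepr_top hq.1 hq.2 x hx y (by omega),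
        rowRepr_top hq.1 hq.2 x hx (y + hper A i j h c) hy]
    exact (hper_mem A i j h c).2 (x % vper A i j r c)
      (lt_of_lt_of_le (Nat.mod_lt x hq.1) hqh) y hy

/-- The smallest horizontal period of a suitable bottom band equals that of the whole window. -/
lemma hper_bot_band {A : ℕ → ℕ → α} {i j r c h : ℕ} (hh : h ≤ r)
    (hqh : vper A i j r c ≤ h) :
    hper A (i + (r - h)) j h c = hper A i j r c := by
  have hq := vper_mem A i j r c
  apply le_antisymm
  · exact Nat.sInf_le ⟨(hper_mem A i j r c).1,
      (hper_mem A i j r c).2.sub (r - h) h c (by omega) le_rfl⟩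
  · refine Nat.sInf_le ⟨(hper_mem A (i + (r - h)) j h c).1, ?_⟩
    intro x hx y hy
    obtain ⟨x', hx'r, hx'q, hxx'⟩ := rowRepr_bot hq.1 hq.2 x hx
    have hx'h : r - h ≤ x' := by omega
    have e : i + x' = i + (r - h) + (x' - (r - h)) := by omega
    rw [hxx' y (by omega), hxx' (y + hper A (i + (r - h)) j h c) hy, e]
    exact (hper_mem A (i + (r - h)) j h c).2 (x' - (r - h)) (by omega) y hy

/-- A greatest element satisfying a predicate below a bound. -/
lemma exists_greatest (P : ℕ → Prop) (m0 n : ℕ) (h0 : m0 < n) (hP : P m0) :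
    ∃ m, m0 ≤ m ∧ m < n ∧ P m ∧ (m + 1 < n → ¬P (m + 1)) := by
  classical
  have hspec : m0 ≤ Nat.findGreatest (fun m => m0 ≤ m ∧ P m) (n - 1) ∧
      P (Nat.findGreatest (fun m => m0 ≤ m ∧ P m) (n - 1)) :=
    Nat.findGreatest_spec (P := fun m => m0 ≤ m ∧ P m) (m := m0) (by omega) ⟨le_rfl, hP⟩
  have hle := Nat.findGreatest_le (P := fun m => m0 ≤ m ∧ P m) (n - 1)
  refine ⟨Nat.findGreatest (fun m => m0 ≤ m ∧ P m) (n - 1), hspec.1, by omega, hspec.2,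
    fun hlt hP1 => ?_⟩
  exact Nat.findGreatest_is_greatest (P := fun m => m0 ≤ m ∧ P m)
    (Nat.lt_succ_self _) (by omega) ⟨by omega, hP1⟩

/-- Constructor for horizontal runs. -/
lemma mk_hrun {A : ℕ → ℕ → α} {n i1 i2 j1 jt h p : ℕ}
    (hi12 : i1 ≤ i2) (hi2n : i2 < n) (hj1 : j1 ≤ jt) (hjtn : jt < n)
    (hheight : i2 - i1 + 1 = h)
    (hjt2 : hper A i1 j1 h (jt - j1 + 1) = p)
    (h2p : 2 * p ≤ jt - j1 + 1)
    (hl : 0 < j1 → hper A i1 (j1 - 1) h (jt - j1 + 2) ≠ p)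
    (hmax : jt + 1 < n → hper A i1 j1 h (jt + 1 - j1 + 1) ≠ p) :
    IsHRun A n i1 i2 j1 jt := by
  unfold IsHRun
  rw [hheight, hjt2]
  refine ⟨hi12, hi2n, hj1, hjtn, h2p, hl, fun hlt hcon => hmax hlt ?_⟩
  rw [show jt + 1 - j1 + 1 = jt - j1 + 2 by omega]
  exact hcon

/-- If both the top and the bottom band of height `h` of an `r × w` window extend one
column to the left keeping the horizontal period `p`, then the whole window extends one
column to the left keeping both smallest periods. -/
lemma pers_left_ext {A : ℕ → ℕ → α} {i1 j1 r w h p q : ℕ}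
    (hj1 : 0 < j1) (hhr : h ≤ r) (hr2h : r < 2 * h)
    (hpw : 2 * p ≤ w)
    (hpdef : hper A i1 j1 r w = p) (hqdef : vper A i1 j1 r w = q)
    (Ht : HPeriod A i1 (j1 - 1) h (w + 1) p)
    (Hb : HPeriod A (i1 + (r - h)) (j1 - 1) h (w + 1) p) :
    pers A i1 (j1 - 1) r (w + 1) = pers A i1 j1 r w := by
  have hppos : 0 < p := by rw [← hpdef]; exact (hper_mem A i1 j1 r w).1
  have hqpos : 0 < q := by rw [← hqdef]; exact (vper_mem A i1 j1 r w).1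
  have hVq : VPeriod A i1 j1 r w q := by rw [← hqdef]; exact (vper_mem A i1 j1 r w).2
  -- `p` is a horizontal period of the whole extended window
  have Hext : HPeriod A i1 (j1 - 1) r (w + 1) p := by
    intro x hx y hy
    rcases lt_or_ge x h with hxh | hxh
    · exact Ht x hxh y hy
    · have e : i1 + x = i1 + (r - h) + (x - (r - h)) := by omega
      rw [e]
      exact Hb (x - (r - h)) (by omega) y hy
  have hperext : hper A i1 (j1 - 1) r (w + 1) = p := by
    refine le_antisymm (Nat.sInf_le ⟨hppos, Hext⟩) ?_
    have h3 : hper A i1 j1 r w ≤ hper A i1 (j1 - 1) r (w + 1) :=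
      Nat.sInf_le ⟨(hper_mem A i1 (j1 - 1) r (w + 1)).1, by
        simpa using ((hper_mem A i1 (j1 - 1) r (w + 1)).2).shift hj1⟩
    rw [hpdef] at h3
    exact h3
  -- `q` is a vertical period of the whole extended window
  have Vext : VPeriod A i1 (j1 - 1) r (w + 1) q := by
    intro y hy x hx
    rcases Nat.eq_zero_or_pos y with rfl | hy0
    · calc A (i1 + x) (j1 - 1 + 0) = A (i1 + x) (j1 - 1 + (0 + p)) :=
          Hext x (by omega) 0 (by omega)
        _ = A (i1 + (x + q)) (j1 - 1 + (0 + p)) := by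
          rw [show j1 - 1 + (0 + p) = j1 + (p - 1) by omega]
          exact hVq (p - 1) (by omega) x hx
        _ = A (i1 + (x + q)) (j1 - 1 + 0) := (Hext (x + q) (by omega) 0 (by omega)).symm
    · rw [show j1 - 1 + y = j1 + (y - 1) by omega]
      exact hVq (y - 1) (by omega) x hx
  have vperext : vper A i1 (j1 - 1) r (w + 1) = q := by
    refine le_antisymm (Nat.sInf_le ⟨hqpos, Vext⟩) ?_
    have h3 : vper A i1 j1 r w ≤ vper A i1 (j1 - 1) r (w + 1) :=
      Nat.sInf_le ⟨(vper_mem A i1 (j1 - 1) r (w + 1)).1, by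
        simpa using ((vper_mem A i1 (j1 - 1) r (w + 1)).2).shift hj1⟩
    rw [hqdef] at h3
    exact h3
  unfold pers
  rw [hperext, vperext, hpdef, hqdef]
set_option maxHeartbeats 1000000 in
/-- Every 2D-run `R = A[i1..i2, j1..j2]` with height in
`[2^k, 2^(k+1))`, where `k = ⌊log₂(i2−i1+1)⌋`, is aligned with a horizontal run `R'`
of height `2^k`, with `hper(R') = hper(R)` and `width(R') ≥ width(R)`, sharing the
top-left or the bottom-left corner with `R`. -/
theorem run2D_aligned_with_horizontal_run {α : Type*} (A : ℕ → ℕ → α)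
    (n i1 i2 j1 j2 : ℕ) (hR : IsRun2D A n i1 i2 j1 j2) :
    ∃ j', j2 ≤ j' ∧
      ((IsHRun A n i1 (i1 + 2 ^ Nat.log 2 (i2 - i1 + 1) - 1) j1 j' ∧
          hper A i1 j1 (2 ^ Nat.log 2 (i2 - i1 + 1)) (j' - j1 + 1) =
            hper A i1 j1 (i2 - i1 + 1) (j2 - j1 + 1)) ∨
        (IsHRun A n (i2 + 1 - 2 ^ Nat.log 2 (i2 - i1 + 1)) i2 j1 j' ∧
          hper A (i2 + 1 - 2 ^ Nat.log 2 (i2 - i1 + 1)) j1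
              (2 ^ Nat.log 2 (i2 - i1 + 1)) (j' - j1 + 1) =
            hper A i1 j1 (i2 - i1 + 1) (j2 - j1 + 1))) := by
  obtain ⟨hi12, hi2n, hj12, hj2n, hhp, hvp, _, _, hleft, _⟩ := hR
  set r := i2 - i1 + 1 with hr
  set w := j2 - j1 + 1 with hw
  set k := Nat.log 2 r with hk
  have hh1 : 1 ≤ 2 ^ k := Nat.one_le_two_pow
  have hhr : 2 ^ k ≤ r := by rw [hk]; exact Nat.pow_log_le_self 2 (by omega)
  have hr2h : r < 2 * 2 ^ k := by
    rw [hk]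
    have h1 := Nat.lt_pow_succ_log_self (by norm_num : 1 < 2) r
    rw [pow_succ] at h1
    omega
  set h := 2 ^ k with hh
  set p := hper A i1 j1 r w with hp
  set q := vper A i1 j1 r w with hq
  clear_value r k h p q
  have hw2 : j2 - j1 + 2 = w + 1 := rfl
  have hppos : 0 < p := by rw [hp]; exact (hper_mem A i1 j1 r w).1
  have hqpos : 0 < q := by rw [hq]; exact (vper_mem A i1 j1 r w).1
  have hqh : q ≤ h := by clear hleft; omega
  have hqh' : vper A i1 j1 r w ≤ h := by rw [← hq]; exact hqh
  -- bottom band start row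
  have hb : i2 + 1 - h = i1 + (r - h) := by clear hleft; omega
  have etop : i1 + h - 1 - i1 + 1 = h := by clear hleft; omega
  have ebot : i2 - (i2 + 1 - h) + 1 = h := by clear hleft; omega
  have a1 : i1 ≤ i1 + h - 1 := by clear hleft; omega
  have a2 : i1 + h - 1 < n := by clear hleft; omega
  have a3 : i2 + 1 - h ≤ i2 := by clear hleft; omega
  -- smallest horizontal periods of the two bands of height `h`
  have htop : hper A i1 j1 h w = p := by rw [hp]; exact hper_top_band hhr hqh'
  have hbot : hper A (i2 + 1 - h) j1 h w = p := by
    rw [hp, hb]; exact hper_bot_band hhr hqh'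
  -- maximal widths for the two bands
  obtain ⟨jt, hjt1, hjtn, hjt2, hjtmax⟩ :=
    exists_greatest (fun m => hper A i1 j1 h (m - j1 + 1) = p) j2 n hj2n htop
  obtain ⟨jb, hjb1, hjbn, hjb2, hjbmax⟩ :=
    exists_greatest (fun m => hper A (i2 + 1 - h) j1 h (m - j1 + 1) = p) j2 n hj2n hbot
  replace hjt2 : hper A i1 j1 h (jt - j1 + 1) = p := hjt2
  replace hjb2 : hper A (i2 + 1 - h) j1 h (jb - j1 + 1) = p := hjb2
  replace hjtmax : jt + 1 < n → ¬hper A i1 j1 h (jt + 1 - j1 + 1) = p := hjtmax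
  replace hjbmax : jb + 1 < n → ¬hper A (i2 + 1 - h) j1 h (jb + 1 - j1 + 1) = p := hjbmax
  have h2pt : 2 * p ≤ jt - j1 + 1 := by
    clear hleft htop hbot hjt2 hjb2 hjtmax hjbmax; omega
  have h2pb : 2 * p ≤ jb - j1 + 1 := by
    clear hleft htop hbot hjt2 hjb2 hjtmax hjbmax; omega
  have hw1t : w + 1 ≤ jt - j1 + 2 := by
    clear hleft htop hbot hjt2 hjb2 hjtmax hjbmax; omega
  have hw1b : w + 1 ≤ jb - j1 + 2 := by
    clear hleft htop hbot hjt2 hjb2 hjtmax hjbmax; omega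
  have hj1t : j1 ≤ jt := le_trans hj12 hjt1
  have hj1b : j1 ≤ jb := le_trans hj12 hjb1
  by_cases hj10 : j1 = 0
  · exact ⟨jt, hjt1, Or.inl ⟨mk_hrun a1 a2 hj1t hjtn etop hjt2 h2pt
      (fun h0 => absurd (hj10 ▸ h0) (lt_irrefl 0)) hjtmax, hjt2⟩⟩
  have hj1pos : 0 < j1 := Nat.pos_of_ne_zero hj10
  by_cases hTL : hper A i1 (j1 - 1) h (jt - j1 + 2) = p
  · -- the top band extends to the left; then the bottom one must not,
    -- otherwise `R` itself would extend to the left with the same periods.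
    have hBL : hper A (i2 + 1 - h) (j1 - 1) h (jb - j1 + 2) ≠ p := by
      intro hBL
      have Ht : HPeriod A i1 (j1 - 1) h (w + 1) p := by
        have h1 := (hper_mem A i1 (j1 - 1) h (jt - j1 + 2)).2
        rw [hTL] at h1
        have h2 := h1.sub 0 h (w + 1) (Nat.zero_add h).le hw1t
        simpa using h2
      have Hb : HPeriod A (i1 + (r - h)) (j1 - 1) h (w + 1) p := by
        have h1 := (hper_mem A (i2 + 1 - h) (j1 - 1) h (jb - j1 + 2)).2
        rw [hBL] at h1
        have h2 := h1.sub 0 h (w + 1) (Nat.zero_add h).le hw1b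
        rw [hb] at h2
        simpa using h2
      have hext := pers_left_ext hj1pos hhr hr2h hhp hp.symm hq.symm Ht Hb
      exact hleft hj1pos (by rw [hw2]; exact hext)
    exact ⟨jb, hjb1, Or.inr ⟨mk_hrun a3 hi2n hj1b hjbn ebot hjb2 h2pb
      (fun _ => hBL) hjbmax, hjb2⟩⟩
  · exact ⟨jt, hjt1, Or.inl ⟨mk_hrun a1 a2 hj1t hjtn etop hjt2 h2pt
      (fun _ => hTL) hjtmax, hjt2⟩⟩

end Formal
end

section
/- Let a and b be non-negative integers and let W and W' be two different primitive (a,b)-arrays. If W^{2,3} and (W')^{2,3} both occur in a 2D-string A with the same top-left corner, then width(W) = width(W'). Symmetrically, if W^{3,2} and (W')^{3,2} both occur in A with the same top-left corner, then height(W) = height(W'). -/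
open scoped Classical

namespace Formal

variable {α : Type*}

/-- `p` is a period of `S` restricted to `[0, n)`. -/
def PerOn (S : ℕ → α) (n p : ℕ) : Prop :=
  ∀ k, k + p < n → S k = S (k + p)

/-- Fine–Wilf periodicity lemma (with the convenient bound `p + q ≤ n`). -/
theorem perOn_gcd (S : ℕ → α) :
    ∀ N p q n, p + q ≤ N → 0 < p → 0 < q → p + q ≤ n →
      PerOn S n p → PerOn S n q → PerOn S n (Nat.gcd p q) := by
  intro N
  induction N with
  | zero => intro p q n hN hp hq; omega
  | succ N ih =>
    intro p q n hN hp hq hn hP hQ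
    rcases lt_trichotomy p q with hlt | heq | hgt
    · -- p < q : replace q by q - p
      have hr : PerOn S (n - p) (q - p) := by
        intro k hk
        have h1 : S k = S (k + q) := hQ k (by omega)
        have h2 : S (k + (q - p)) = S (k + (q - p) + p) := hP _ (by omega)
        have e : k + (q - p) + p = k + q := by omega
        rw [h1, ← e]
        exact h2.symm
      have hPn : PerOn S (n - p) p := fun k hk => hP k (by omega)
      have hg0 : Nat.gcd p (q - p) = Nat.gcd p q := by
        rw [Nat.gcd_sub_self_right (le_of_lt hlt)]
      have hg : PerOn S (n - p) (Nat.gcd p q) := by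
        rw [← hg0]
        exact ih p (q - p) (n - p) (by omega) hp (by omega) (by omega) hPn hr
      set g := Nat.gcd p q with hgdef
      have hgp : g ∣ p := Nat.gcd_dvd_left p q
      have hgq : g ∣ q := Nat.gcd_dvd_right p q
      have hgle : g ≤ q - p :=
        Nat.le_of_dvd (by omega) (Nat.dvd_sub hgq hgp)
      have hgpos : 0 < g := Nat.gcd_pos_of_pos_left _ hp
      intro k hk
      by_cases hcase : k + g < n - p
      · exact hg k hcase
      · have hkp : p ≤ k := by omega
        have e1 : S (k - p) = S (k - p + p) := hP _ (by omega)
        have e2 : S (k - p + g) = S (k - p + g + p) := hP _ (by omega)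
        have e3 : S (k - p) = S (k - p + g) := hg _ (by omega)
        have e4 : k - p + p = k := by omega
        have e5 : k - p + g + p = k + g := by omega
        rw [e4] at e1
        rw [e5] at e2
        rw [← e1, e3, e2]
    · subst heq
      rw [Nat.gcd_self]
      exact hP
    · -- q < p : symmetric
      have hr : PerOn S (n - q) (p - q) := by
        intro k hk
        have h1 : S k = S (k + p) := hP k (by omega)
        have h2 : S (k + (p - q)) = S (k + (p - q) + q) := hQ _ (by omega)
        have e : k + (p - q) + q = k + p := by omega
        rw [h1, ← e]
        exact h2.symm
      have hQn : PerOn S (n - q) q := fun k hk => hQ k (by omega)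
      have hg0 : Nat.gcd q (p - q) = Nat.gcd p q := by
        rw [Nat.gcd_sub_self_right (le_of_lt hgt), Nat.gcd_comm]
      have hg : PerOn S (n - q) (Nat.gcd p q) := by
        rw [← hg0]
        exact ih q (p - q) (n - q) (by omega) hq (by omega) (by omega) hQn hr
      set g := Nat.gcd p q with hgdef
      have hgp : g ∣ p := Nat.gcd_dvd_left p q
      have hgq : g ∣ q := Nat.gcd_dvd_right p q
      have hgle : g ≤ p - q :=
        Nat.le_of_dvd (by omega) (Nat.dvd_sub hgp hgq)
      have hgpos : 0 < g := Nat.gcd_pos_of_pos_left _ hp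
      intro k hk
      by_cases hcase : k + g < n - q
      · exact hg k hcase
      · have hkq : q ≤ k := by omega
        have e1 : S (k - q) = S (k - q + q) := hQ _ (by omega)
        have e2 : S (k - q + g) = S (k - q + g + q) := hQ _ (by omega)
        have e3 : S (k - q) = S (k - q + g) := hg _ (by omega)
        have e4 : k - q + q = k := by omega
        have e5 : k - q + g + q = k + g := by omega
        rw [e4] at e1
        rw [e5] at e2
        rw [← e1, e3, e2]

/-- A `g`-periodic string on `[0, n)` satisfies `S y = S (y % g)`. -/
theorem perOn_mod (S : ℕ → α) (n g : ℕ) (hg : 0 < g) (hP : PerOn S n g) :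
    ∀ y, y < n → S y = S (y % g) := by
  intro y
  induction y using Nat.strong_induction_on with
  | _ y ih =>
    intro hy
    by_cases hyg : y < g
    · rw [Nat.mod_eq_of_lt hyg]
    · have hgy : g ≤ y := by omega
      have e1 : S (y - g) = S (y - g + g) := hP _ (by omega)
      have e2 : y - g + g = y := by omega
      rw [e2] at e1
      rw [← e1, Nat.mod_eq_sub_mod hgy]
      exact ih (y - g) (by omega) (by omega)

/-- The core width argument: if `W^{2,3}` and `(W')^{2,3}` are read off the same grid
`S2` with comparable dimensions, then `w = w'`. -/
theorem main_aux (S2 : ℕ → ℕ → α) (W W' : ℕ → ℕ → α) (h w h' w' : ℕ)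
    (hW : PrimitiveA W h w) (hW' : PrimitiveA W' h' w')
    (hh : h < 2 * h') (hh' : h' < 2 * h) (hw : w < 2 * w') (hw' : w' < 2 * w)
    (occ : ∀ x < 2 * h, ∀ y < 3 * w, S2 x y = W (x % h) (y % w))
    (occ' : ∀ x < 2 * h', ∀ y < 3 * w', S2 x y = W' (x % h') (y % w')) : w = w' := by
  obtain ⟨hh0, hw0, hWp⟩ := hW
  obtain ⟨hh0', hw0', hWp'⟩ := hW'
  set g := Nat.gcd w w' with hgdef
  have hg0 : 0 < g := Nat.gcd_pos_of_pos_left _ hw0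
  have hgw : g ∣ w := Nat.gcd_dvd_left _ _
  have hgw' : g ∣ w' := Nat.gcd_dvd_right _ _
  have key : ∀ x, x < 2 * h → x < 2 * h' → ∀ y, y < min (3 * w) (3 * w') →
      S2 x y = S2 x (y % g) := by
    intro x hx hx'
    have hPw : PerOn (fun y => S2 x y) (min (3 * w) (3 * w')) w := by
      intro k hk
      simp only
      rw [occ x hx k (by omega), occ x hx (k + w) (by omega), Nat.add_mod_right]
    have hPw' : PerOn (fun y => S2 x y) (min (3 * w) (3 * w')) w' := by
      intro k hk
      simp only
      rw [occ' x hx' k (by omega), occ' x hx' (k + w') (by omega), Nat.add_mod_right]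
    have hgper := perOn_gcd (fun y => S2 x y) (w + w') w w'
      (min (3 * w) (3 * w')) le_rfl hw0 hw0' (by omega) hPw hPw'
    exact perOn_mod _ _ _ hg0 hgper
  have e1 : g = w := by
    refine (hWp h g hh0 hg0 dvd_rfl hgw ?_).2
    intro x hx y hy
    have hx2 : x < 2 * h := by omega
    have hx2' : x < 2 * h' := by omega
    have hk := key x hx2 hx2' y (by omega)
    have a1 := occ x hx2 y (by omega)
    have a2 := occ x hx2 (y % g) (by
      have := Nat.mod_le y g; omega)
    rw [Nat.mod_eq_of_lt hx, Nat.mod_eq_of_lt hy] at a1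
    rw [Nat.mod_eq_of_lt hx,
      Nat.mod_eq_of_lt (lt_of_le_of_lt (Nat.mod_le y g) hy)] at a2
    rw [Nat.mod_eq_of_lt hx, ← a1, ← a2]
    exact hk
  have e2 : g = w' := by
    refine (hWp' h' g hh0' hg0 dvd_rfl hgw' ?_).2
    intro x hx y hy
    have hx2 : x < 2 * h := by omega
    have hx2' : x < 2 * h' := by omega
    have hk := key x hx2 hx2' y (by omega)
    have a1 := occ' x hx2' y (by omega)
    have a2 := occ' x hx2' (y % g) (by
      have := Nat.mod_le y g; omega)
    rw [Nat.mod_eq_of_lt hx, Nat.mod_eq_of_lt hy] at a1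
    rw [Nat.mod_eq_of_lt hx,
      Nat.mod_eq_of_lt (lt_of_le_of_lt (Nat.mod_le y g) hy)] at a2
    rw [Nat.mod_eq_of_lt hx, ← a1, ← a2]
    exact hk
  omega

/-- Primitivity is preserved by transposition. -/
theorem primitive_transpose (W : ℕ → ℕ → α) (h w : ℕ) (hW : PrimitiveA W h w) :
    PrimitiveA (fun x y => W y x) w h := by
  obtain ⟨h0, w0, hp⟩ := hW
  refine ⟨w0, h0, fun p q hp0 hq0 hpd hqd ht => ?_⟩
  have := hp q p hq0 hp0 hqd hpd (fun x hx y hy => ht y hy x hx)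
  exact ⟨this.2, this.1⟩

/-- If `W ≠ W'` are primitive `(a,b)`-arrays and `W^{2,3}` and
`(W')^{2,3}` occur in the `m × n` 2D-string `A` with the same top-left corner, then
`width(W) = width(W')`; symmetrically, if `W^{3,2}` and `(W')^{3,2}` occur with the
same top-left corner, then `height(W) = height(W')`. -/
theorem per2D {α : Type*} (a b m n : ℕ) (A W W' : ℕ → ℕ → α) (h w h' w' : ℕ)
    (hW : PrimitiveA W h w) (hW' : PrimitiveA W' h' w')
    (hd : IsABDims a b h w) (hd' : IsABDims a b h' w')
    (hne : ¬ ArrEq W h w W' h' w') :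
    (∀ i j, i + 2 * h ≤ m → j + 3 * w ≤ n → i + 2 * h' ≤ m → j + 3 * w' ≤ n →
      OccAt A i j W h w 2 3 → OccAt A i j W' h' w' 2 3 → w = w') ∧
    (∀ i j, i + 3 * h ≤ m → j + 2 * w ≤ n → i + 3 * h' ≤ m → j + 2 * w' ≤ n →
      OccAt A i j W h w 3 2 → OccAt A i j W' h' w' 3 2 → h = h') := by
  obtain ⟨ha, ha2, hb, hb2⟩ := hd
  obtain ⟨ha', ha2', hb', hb2'⟩ := hd'
  have ea : 2 ^ (a + 1) = 2 * 2 ^ a := by rw [pow_succ]; ring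
  have eb : 2 ^ (b + 1) = 2 * 2 ^ b := by rw [pow_succ]; ring
  have d1 : h < 2 * h' := by omega
  have d2 : h' < 2 * h := by omega
  have d3 : w < 2 * w' := by omega
  have d4 : w' < 2 * w := by omega
  constructor
  · intro i j _ _ _ _ o o'
    exact main_aux (fun x y => A (i + x) (j + y)) W W' h w h' w' hW hW' d1 d2 d3 d4
      (fun x hx y hy => o x hx y hy) (fun x hx y hy => o' x hx y hy)
  · intro i j _ _ _ _ o o'
    exact main_aux (fun x y => A (i + y) (j + x)) (fun x y => W y x) (fun x y => W' y x)
      w h w' h' (primitive_transpose W h w hW) (primitive_transpose W' h' w' hW')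
      d3 d4 d1 d2 (fun x hx y hy => o y hy x hx) (fun x hx y hy => o' y hy x hx)

end Formal
end

section
/- Let a and b be non-negative integers and let W and W' be primitive (a,b)-arrays. If W^{3,3} and (W')^{3,3} both occur in a 2D-string A with the same top-left corner, then W = W'. -/
open scoped Classical

namespace Formal

variable {α : Type*}

theorem mod_add_of_dvd (x g r : ℕ) (hd : g ∣ r) : (x + r) % g = x % g := by
  obtain ⟨c, rfl⟩ := hd; exact Nat.add_mul_mod_self_left x g c

theorem fine_wilf_s10 {α : Type*} (p q N : ℕ) (f : ℕ → α) (hp : 0 < p) (hq : 0 < q)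
    (hN : p + q ≤ N)
    (hfp : ∀ k, k + p < N → f k = f (k + p))
    (hfq : ∀ k, k + q < N → f k = f (k + q)) :
    ∀ k l, k < N → l < N → k % Nat.gcd p q = l % Nat.gcd p q → f k = f l := by
  rcases lt_trichotomy p q with hlt | heq | hgt
  · -- p < q : reduce to (p, q - p) on [0, N - p)
    have key := fine_wilf_s10 p (q - p) (N - p) f hp (by omega) (by omega)
      (fun k hk => hfp k (by omega))
      (fun k hk => by
        have h1 := hfq k (by omega)
        have h2 := hfp (k + (q - p)) (by omega)
        rw [h1, show k + q = k + (q - p) + p by omega, ← h2])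
    have hgcd : Nat.gcd p (q - p) = Nat.gcd p q := by
      conv_rhs => rw [show q = (q - p) + p by omega]
      rw [Nat.gcd_add_self_right]
    rw [hgcd] at key
    have hgdvd : Nat.gcd p q ∣ p := Nat.gcd_dvd_left p q
    have hred : ∀ k, k < N → ∃ k', k' < N - p ∧ k' % Nat.gcd p q = k % Nat.gcd p q ∧
        f k' = f k := by
      intro k hk
      by_cases hc : k < N - p
      · exact ⟨k, hc, rfl, rfl⟩
      · refine ⟨k - p, by omega, ?_, ?_⟩
        · conv_rhs => rw [show k = (k - p) + p by omega]
          exact (mod_add_of_dvd _ _ _ hgdvd).symm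
        · have := hfp (k - p) (by omega)
          rw [show k - p + p = k by omega] at this
          exact this
    intro k l hk hl hmod
    obtain ⟨k1, hk1, hk1m, hk1f⟩ := hred k hk
    obtain ⟨l1, hl1, hl1m, hl1f⟩ := hred l hl
    rw [← hk1f, ← hl1f]
    exact key k1 l1 hk1 hl1 (by rw [hk1m, hl1m, hmod])
  · -- p = q
    subst heq
    have aux : ∀ k, k < N → f (k % p) = f k := by
      intro k
      induction k using Nat.strong_induction_on with
      | _ k ih =>
        intro hk
        by_cases hc : k < p
        · rw [Nat.mod_eq_of_lt hc]
        · have h1 := hfp (k - p) (by omega)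
          rw [show k - p + p = k by omega] at h1
          have h2 : (k - p) % p = k % p := by
            conv_rhs => rw [show k = (k - p) + p by omega, Nat.add_mod_right]
          rw [← h2, ih (k - p) (by omega) (by omega), h1]
    intro k l hk hl hmod
    rw [Nat.gcd_self] at hmod
    rw [← aux k hk, ← aux l hl, hmod]
  · -- q < p : reduce to (p - q, q) on [0, N - q)
    have key := fine_wilf_s10 (p - q) q (N - q) f (by omega) hq (by omega)
      (fun k hk => by
        have h1 := hfp k (by omega)
        have h2 := hfq (k + (p - q)) (by omega)
        rw [h1, show k + p = k + (p - q) + q by omega, ← h2])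
      (fun k hk => hfq k (by omega))
    have hgcd : Nat.gcd (p - q) q = Nat.gcd p q := by
      conv_rhs => rw [show p = (p - q) + q by omega]
      rw [Nat.gcd_add_self_left]
    rw [hgcd] at key
    have hgdvd : Nat.gcd p q ∣ q := Nat.gcd_dvd_right p q
    have hred : ∀ k, k < N → ∃ k', k' < N - q ∧ k' % Nat.gcd p q = k % Nat.gcd p q ∧
        f k' = f k := by
      intro k hk
      by_cases hc : k < N - q
      · exact ⟨k, hc, rfl, rfl⟩
      · refine ⟨k - q, by omega, ?_, ?_⟩
        · conv_rhs => rw [show k = (k - q) + q by omega]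
          exact (mod_add_of_dvd _ _ _ hgdvd).symm
        · have := hfq (k - q) (by omega)
          rw [show k - q + q = k by omega] at this
          exact this
    intro k l hk hl hmod
    obtain ⟨k1, hk1, hk1m, hk1f⟩ := hred k hk
    obtain ⟨l1, hl1, hl1m, hl1f⟩ := hred l hl
    rw [← hk1f, ← hl1f]
    exact key k1 l1 hk1 hl1 (by rw [hk1m, hl1m, hmod])
termination_by p + q
decreasing_by all_goals omega

/-- If `W` and `W'` are primitive `(a,b)`-arrays and `W^{3,3}` and
`(W')^{3,3}` occur in the `m × n` 2D-string `A` with the same top-left corner, then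
`W = W'`. -/
theorem cube_occurrences_same_corner {α : Type*} (a b m n : ℕ)
    (A W W' : ℕ → ℕ → α) (h w h' w' : ℕ)
    (hW : PrimitiveA W h w) (hW' : PrimitiveA W' h' w')
    (hd : IsABDims a b h w) (hd' : IsABDims a b h' w')
    (i j : ℕ) (hm : i + 3 * h ≤ m) (hn : j + 3 * w ≤ n)
    (hm' : i + 3 * h' ≤ m) (hn' : j + 3 * w' ≤ n)
    (ho : OccAt A i j W h w 3 3) (ho' : OccAt A i j W' h' w' 3 3) :
    ArrEq W h w W' h' w' := by
  obtain ⟨hh, hww, hprim⟩ := hW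
  obtain ⟨hh', hww', hprim'⟩ := hW'
  obtain ⟨hah, hah2, hbw, hbw2⟩ := hd
  obtain ⟨hah', hah2', hbw', hbw2'⟩ := hd'
  rw [pow_succ] at hah2 hbw2 hah2' hbw2'
  have h2h' : h < 2 * h' := by omega
  have h2h : h' < 2 * h := by omega
  have w2w' : w < 2 * w' := by omega
  have w2w : w' < 2 * w := by omega
  set gv := Nat.gcd h h' with hgv
  set gw := Nat.gcd w w' with hgw
  have hgvp : 0 < gv := Nat.gcd_pos_of_pos_left h' hh
  have hgwp : 0 < gw := Nat.gcd_pos_of_pos_left w' hww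
  have hgvh : gv ∣ h := Nat.gcd_dvd_left h h'
  have hgvh' : gv ∣ h' := Nat.gcd_dvd_right h h'
  have hgww : gw ∣ w := Nat.gcd_dvd_left w w'
  have hgww' : gw ∣ w' := Nat.gcd_dvd_right w w'
  have hgvle : gv ≤ h := Nat.le_of_dvd hh hgvh
  have hgvle' : gv ≤ h' := Nat.le_of_dvd hh' hgvh'
  have hgwle : gw ≤ w := Nat.le_of_dvd hww hgww
  have hgwle' : gw ≤ w' := Nat.le_of_dvd hww' hgww'
  -- vertical Fine–Wilf on each column y < 3 * min w w'
  have colPer : ∀ y, y < 3 * w → y < 3 * w' → ∀ x x', x < 3 * min h h' →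
      x' < 3 * min h h' → x % gv = x' % gv →
      A (i + x) (j + y) = A (i + x') (j + y) := by
    intro y hy hy'
    apply fine_wilf_s10 h h' (3 * min h h') (fun x => A (i + x) (j + y)) hh hh' (by omega)
    · intro k hk
      have e1 := ho k (by omega) y hy
      have e2 := ho (k + h) (by omega) y hy
      rw [Nat.add_mod_right] at e2
      simp only [e1, e2]
    · intro k hk
      have e1 := ho' k (by omega) y hy'
      have e2 := ho' (k + h') (by omega) y hy'
      rw [Nat.add_mod_right] at e2
      simp only [e1, e2]
  have rowPer : ∀ x, x < 3 * h → x < 3 * h' → ∀ y y', y < 3 * min w w' →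
      y' < 3 * min w w' → y % gw = y' % gw →
      A (i + x) (j + y) = A (i + x) (j + y') := by
    intro x hx hx'
    apply fine_wilf_s10 w w' (3 * min w w') (fun y => A (i + x) (j + y)) hww hww' (by omega)
    · intro k hk
      have e1 := ho x hx k (by omega)
      have e2 := ho x hx (k + w) (by omega)
      rw [Nat.add_mod_right] at e2
      simp only [e1, e2]
    · intro k hk
      have e1 := ho' x hx' k (by omega)
      have e2 := ho' x hx' (k + w') (by omega)
      rw [Nat.add_mod_right] at e2
      simp only [e1, e2]
  -- W is tiled by its top-left gv × gw block
  have tile : ∀ x < h, ∀ y < w, W x y = W (x % gv) (y % gw) := by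
    intro x hx y hy
    have e0 := ho x (by omega) y (by omega)
    rw [Nat.mod_eq_of_lt hx, Nat.mod_eq_of_lt hy] at e0
    have hxgv : x % gv < gv := Nat.mod_lt x hgvp
    have hygw : y % gw < gw := Nat.mod_lt y hgwp
    have e1 : A (i + x) (j + y) = A (i + x % gv) (j + y) := by
      apply colPer y (by omega) (by omega) x (x % gv) (by omega) (by omega)
      exact (Nat.mod_mod_of_dvd x dvd_rfl).symm
    have e2 : A (i + x % gv) (j + y) = A (i + x % gv) (j + y % gw) := by
      apply rowPer (x % gv) (by omega) (by omega) y (y % gw) (by omega) (by omega)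
      exact (Nat.mod_mod_of_dvd y dvd_rfl).symm
    have e3 := ho (x % gv) (by omega) (y % gw) (by omega)
    rw [Nat.mod_eq_of_lt (by omega : x % gv < h),
        Nat.mod_eq_of_lt (by omega : y % gw < w)] at e3
    rw [← e0, e1, e2, e3]
  obtain ⟨hgveq, hgweq⟩ := hprim gv gw hgvp hgwp hgvh hgww tile
  -- h ∣ h' and h' < 2h force h' = h; similarly for widths
  have hdvd : h ∣ h' := hgveq ▸ hgvh'
  have wdvd : w ∣ w' := hgweq ▸ hgww'
  have heq : h' = h := by
    obtain ⟨c, rfl⟩ := hdvd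
    rcases c with _ | _ | c
    · omega
    · omega
    · rw [Nat.mul_succ, Nat.mul_succ] at h2h; omega
  have weq : w' = w := by
    obtain ⟨c, rfl⟩ := wdvd
    rcases c with _ | _ | c
    · omega
    · omega
    · rw [Nat.mul_succ, Nat.mul_succ] at w2w; omega
  refine ⟨heq.symm, weq.symm, ?_⟩
  intro x hx y hy
  have e0 := ho x (by omega) y (by omega)
  have e0' := ho' x (by omega) y (by omega)
  rw [Nat.mod_eq_of_lt hx, Nat.mod_eq_of_lt hy] at e0
  rw [Nat.mod_eq_of_lt (by omega : x < h'), Nat.mod_eq_of_lt (by omega : y < w')] at e0'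
  rw [← e0, e0']

end Formal
end
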